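/- arXiv:2305.18788 — 9 statements merged into one kernel-verified Lean document; each statement's English description precedes it below -/
import Mathlib

section
/- Let Q be the transition matrix of a Markov chain on a finite state space S with Q(u,u) > 0 for all u, and let π be a strictly positive stationary distribution for Q. Let ρ be a probability measure on S. Then D(ρQ ‖ π) = D(ρ ‖ π) if and only if the density F = ρ/π is constant on each communicating class of Q; in particular, if ρQ ≠ ρ then D(ρQ ‖ π) < D(ρ ‖ π). -/
open Finset

/-- With a strictly positive stationary distribution, every edge can be traversed back. -/
lemma markov_closed {S : Type*} [Fintype S]
    (Q : S → S → ℝ) (π : S → ℝ)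
    (hQ0 : ∀ u v, 0 ≤ Q u v) (hQ1 : ∀ u, ∑ v, Q u v = 1)
    (hπ0 : ∀ u, 0 < π u)
    (hπQ : ∀ v, ∑ u, π u * Q u v = π v) :
    ∀ u v, 0 < Q u v → Relation.ReflTransGen (fun a b => 0 < Q a b) v u := by
  classical
  intro u v huv
  set R : S → S → Prop := fun a b => 0 < Q a b with hR
  set A : Finset S := Finset.univ.filter (fun w => Relation.ReflTransGen R v w) with hA
  have hvA : v ∈ A := by
    simp only [hA, mem_filter, mem_univ, true_and]
    exact Relation.ReflTransGen.refl
  have hAcl : ∀ b ∈ A, ∀ a, 0 < Q b a → a ∈ A := by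
    intro b hb a hba
    simp only [hA, mem_filter, mem_univ, true_and] at hb ⊢
    exact hb.tail hba
  have hrow : ∀ b ∈ A, ∑ a ∈ A, Q b a = 1 := by
    intro b hb
    rw [← hQ1 b]
    refine Finset.sum_subset (Finset.subset_univ A) ?_
    intro a _ haA
    by_contra h
    exact haA (hAcl b hb a (lt_of_le_of_ne (hQ0 b a) (Ne.symm h)))
  have hsplit : ∑ a ∈ A, π a
      = ∑ b ∈ A, π b * (∑ a ∈ A, Q b a) + ∑ b ∈ Aᶜ, π b * (∑ a ∈ A, Q b a) := by
    have h1 : ∑ a ∈ A, π a = ∑ a ∈ A, ∑ b, π b * Q b a := by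
      refine Finset.sum_congr rfl fun a _ => (hπQ a).symm
    rw [h1, Finset.sum_comm]
    have h2 : ∀ b : S, ∑ a ∈ A, π b * Q b a = π b * (∑ a ∈ A, Q b a) :=
      fun b => (Finset.mul_sum _ _ _).symm
    simp only [h2]
    rw [← Finset.sum_compl_add_sum A (fun b => π b * (∑ a ∈ A, Q b a))]
    rw [add_comm]
  have hzero : ∑ b ∈ Aᶜ, π b * (∑ a ∈ A, Q b a) = 0 := by
    have : ∑ b ∈ A, π b * (∑ a ∈ A, Q b a) = ∑ b ∈ A, π b := by
      refine Finset.sum_congr rfl fun b hb => by rw [hrow b hb, mul_one]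
    nlinarith [hsplit, this]
  have huA : u ∈ A := by
    by_contra huA
    have h1 : π u * (∑ a ∈ A, Q u a) = 0 := by
      have := (Finset.sum_eq_zero_iff_of_nonneg ?_).1 hzero u (by simpa using huA)
      · exact this
      · intro b _
        exact mul_nonneg (hπ0 b).le (Finset.sum_nonneg fun a _ => hQ0 b a)
    have h2 : ∑ a ∈ A, Q u a = 0 := by
      rcases mul_eq_zero.1 h1 with h | h
      · exact absurd h (hπ0 u).ne'
      · exact h
    have h3 : Q u v = 0 :=
      (Finset.sum_eq_zero_iff_of_nonneg fun a _ => hQ0 u a).1 h2 v hvA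
    exact huv.ne' h3
  simpa [hA] using huA

lemma jensen_v {S : Type*} [Fintype S]
    (Q : S → S → ℝ) (π ρ : S → ℝ)
    (hQ0 : ∀ u v, 0 ≤ Q u v) (hπ0 : ∀ u, 0 < π u)
    (hπQ : ∀ v, ∑ u, π u * Q u v = π v)
    (hρ0 : ∀ u, 0 ≤ ρ u) (v : S) :
    (∑ u, ρ u * Q u v) * Real.log ((∑ u, ρ u * Q u v) / π v)
      ≤ ∑ u, (π u * Q u v) * ((ρ u / π u) * Real.log (ρ u / π u)) := by
  classical
  set w : S → ℝ := fun u => π u * Q u v / π v with hw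
  have hw0 : ∀ u ∈ Finset.univ, 0 ≤ w u := fun u _ =>
    div_nonneg (mul_nonneg (hπ0 u).le (hQ0 u v)) (hπ0 v).le
  have hw1 : ∑ u, w u = 1 := by
    simp only [hw, ← Finset.sum_div, hπQ v, div_self (hπ0 v).ne']
  have hpt : ∑ u, w u • (ρ u / π u) = (∑ u, ρ u * Q u v) / π v := by
    rw [Finset.sum_div]
    refine Finset.sum_congr rfl fun u _ => ?_
    simp only [smul_eq_mul, hw]
    field_simp [(hπ0 u).ne', (hπ0 v).ne']
  have hmem : ∀ u ∈ Finset.univ, ρ u / π u ∈ Set.Ici (0:ℝ) :=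
    fun u _ => div_nonneg (hρ0 u) (hπ0 u).le
  have hJ := Real.convexOn_mul_log.map_sum_le hw0 hw1 hmem
  rw [hpt] at hJ
  have key : ((∑ u, ρ u * Q u v) / π v) * Real.log ((∑ u, ρ u * Q u v) / π v)
      ≤ ∑ u, w u * ((ρ u / π u) * Real.log (ρ u / π u)) := by
    simpa [smul_eq_mul] using hJ
  have hmul := mul_le_mul_of_nonneg_left key (hπ0 v).le
  calc (∑ u, ρ u * Q u v) * Real.log ((∑ u, ρ u * Q u v) / π v)
      = π v * (((∑ u, ρ u * Q u v) / π v) * Real.log ((∑ u, ρ u * Q u v) / π v)) := by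
        rw [← mul_assoc, mul_div_cancel₀ _ (hπ0 v).ne']
    _ ≤ π v * ∑ u, w u * ((ρ u / π u) * Real.log (ρ u / π u)) := hmul
    _ = ∑ u, (π u * Q u v) * ((ρ u / π u) * Real.log (ρ u / π u)) := by
        rw [Finset.mul_sum]
        refine Finset.sum_congr rfl fun u _ => ?_
        simp only [hw]
        field_simp [(hπ0 u).ne', (hπ0 v).ne']

lemma jensen_v_eq {S : Type*} [Fintype S]
    (Q : S → S → ℝ) (π ρ : S → ℝ)
    (hQ0 : ∀ u v, 0 ≤ Q u v) (hQd : ∀ u, 0 < Q u u) (hπ0 : ∀ u, 0 < π u)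
    (hπQ : ∀ v, ∑ u, π u * Q u v = π v)
    (hρ0 : ∀ u, 0 ≤ ρ u) (v : S)
    (heq : (∑ u, ρ u * Q u v) * Real.log ((∑ u, ρ u * Q u v) / π v)
      = ∑ u, (π u * Q u v) * ((ρ u / π u) * Real.log (ρ u / π u))) :
    ∀ u, 0 < Q u v → ρ u / π u = ρ v / π v := by
  classical
  intro u huv
  set w : S → ℝ := fun u => π u * Q u v / π v with hw
  set t : Finset S := Finset.univ.filter (fun u => 0 < Q u v) with ht
  have hout : ∀ a, a ∉ t → w a = 0 := by
    intro a hat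
    have : Q a v = 0 := by
      by_contra h
      exact hat (by simp [ht, lt_of_le_of_ne (hQ0 a v) (Ne.symm h)])
    simp [hw, this]
  have hw0 : ∀ a ∈ t, 0 < w a := by
    intro a ha
    simp only [ht, mem_filter] at ha
    exact div_pos (mul_pos (hπ0 a) ha.2) (hπ0 v)
  have hsub : ∀ (f : S → ℝ), ∑ a ∈ t, w a * f a = ∑ a, w a * f a := by
    intro f
    refine Finset.sum_subset (Finset.subset_univ t) fun a _ hat => by
      rw [hout a hat, zero_mul]
  have hw1 : ∑ a ∈ t, w a = 1 := by
    have : ∑ a ∈ t, w a = ∑ a, w a := by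
      simpa using hsub (fun _ => 1)
    rw [this]
    simp only [hw, ← Finset.sum_div, hπQ v, div_self (hπ0 v).ne']
  have hpt : ∑ a ∈ t, w a • (ρ a / π a) = (∑ a, ρ a * Q a v) / π v := by
    simp only [smul_eq_mul]
    rw [hsub]
    rw [Finset.sum_div]
    refine Finset.sum_congr rfl fun a _ => ?_
    simp only [hw]
    field_simp [(hπ0 a).ne', (hπ0 v).ne']
  have hmem : ∀ a ∈ t, ρ a / π a ∈ Set.Ici (0:ℝ) :=
    fun a _ => div_nonneg (hρ0 a) (hπ0 a).le
  -- turn heq into the form required by eq_of_le_map_sum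
  have heq' : ∑ a ∈ t, w a • ((ρ a / π a) * Real.log (ρ a / π a))
      = ((∑ a, ρ a * Q a v) / π v) * Real.log ((∑ a, ρ a * Q a v) / π v) := by
    have h1 : ∑ a ∈ t, w a • ((ρ a / π a) * Real.log (ρ a / π a))
        = (∑ a, (π a * Q a v) * ((ρ a / π a) * Real.log (ρ a / π a))) / π v := by
      simp only [smul_eq_mul]
      rw [hsub, Finset.sum_div]
      refine Finset.sum_congr rfl fun a _ => ?_
      simp only [hw]
      ring
    rw [h1, ← heq]
    have h2 : (∑ a, ρ a * Q a v) * Real.log ((∑ a, ρ a * Q a v) / π v)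
        = π v * (((∑ a, ρ a * Q a v) / π v) * Real.log ((∑ a, ρ a * Q a v) / π v)) := by
      rw [← mul_assoc, mul_div_cancel₀ _ (hπ0 v).ne']
    rw [h2, mul_div_cancel_left₀ _ (hπ0 v).ne']
  have hle : ∑ a ∈ t, w a • (fun x : ℝ => x * Real.log x) (ρ a / π a)
      ≤ (fun x : ℝ => x * Real.log x) (∑ a ∈ t, w a • (ρ a / π a)) := by
    rw [hpt]
    exact le_of_eq heq'
  have hconst := Real.strictConvexOn_mul_log.eq_of_le_map_sum hw0 hw1 hmem hle
  have hut : u ∈ t := by simp [ht, huv]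
  have hvt : v ∈ t := by simp [ht, hQd v]
  exact hconst hut hvt

/-- For a finite Markov chain Q with positive diagonal and strictly
positive stationary distribution π, and a probability measure ρ:
D(ρQ‖π) = D(ρ‖π) iff ρ/π is constant on each communicating class; in particular
if ρQ ≠ ρ then D(ρQ‖π) < D(ρ‖π). -/
theorem entropy_decay_markov {S : Type*} [Fintype S]
    (Q : S → S → ℝ) (π ρ : S → ℝ)
    (hQ0 : ∀ u v, 0 ≤ Q u v) (hQ1 : ∀ u, ∑ v, Q u v = 1)
    (hQd : ∀ u, 0 < Q u u)
    (hπ0 : ∀ u, 0 < π u) (hπ1 : ∑ u, π u = 1)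
    (hπQ : ∀ v, ∑ u, π u * Q u v = π v)
    (hρ0 : ∀ u, 0 ≤ ρ u) (hρ1 : ∑ u, ρ u = 1) :
    ((∑ v, (∑ u, ρ u * Q u v) * Real.log ((∑ u, ρ u * Q u v) / π v)
        = ∑ u, ρ u * Real.log (ρ u / π u))
      ↔ (∀ u v : S, Relation.ReflTransGen (fun a b => 0 < Q a b) u v →
           Relation.ReflTransGen (fun a b => 0 < Q a b) v u →
           ρ u / π u = ρ v / π v))
    ∧ ((fun v => ∑ u, ρ u * Q u v) ≠ ρ →
        ∑ v, (∑ u, ρ u * Q u v) * Real.log ((∑ u, ρ u * Q u v) / π v)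
          < ∑ u, ρ u * Real.log (ρ u / π u)) := by
  classical
  -- total of the per-state Jensen upper bounds equals the relative entropy of ρ
  have hRHS : ∑ v, ∑ u, (π u * Q u v) * ((ρ u / π u) * Real.log (ρ u / π u))
      = ∑ u, ρ u * Real.log (ρ u / π u) := by
    rw [Finset.sum_comm]
    refine Finset.sum_congr rfl fun u _ => ?_
    have h1 : ∀ v : S, (π u * Q u v) * ((ρ u / π u) * Real.log (ρ u / π u))
        = Q u v * (π u * ((ρ u / π u) * Real.log (ρ u / π u))) := fun v => by ring
    simp only [h1]
    rw [← Finset.sum_mul, hQ1 u, one_mul, ← mul_assoc, mul_div_cancel₀ _ (hπ0 u).ne']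
  have hle : ∑ v, (∑ u, ρ u * Q u v) * Real.log ((∑ u, ρ u * Q u v) / π v)
      ≤ ∑ u, ρ u * Real.log (ρ u / π u) := by
    rw [← hRHS]
    exact Finset.sum_le_sum fun v _ => jensen_v Q π ρ hQ0 hπ0 hπQ hρ0 v
  -- forward: equality implies constancy on communicating classes
  have forward : (∑ v, (∑ u, ρ u * Q u v) * Real.log ((∑ u, ρ u * Q u v) / π v)
        = ∑ u, ρ u * Real.log (ρ u / π u))
      → ∀ u v : S, Relation.ReflTransGen (fun a b => 0 < Q a b) u v →
          Relation.ReflTransGen (fun a b => 0 < Q a b) v u →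
          ρ u / π u = ρ v / π v := by
    intro heq
    have heq2 : ∑ v, (∑ u, ρ u * Q u v) * Real.log ((∑ u, ρ u * Q u v) / π v)
        = ∑ v, ∑ u, (π u * Q u v) * ((ρ u / π u) * Real.log (ρ u / π u)) := by
      rw [heq, hRHS]
    have hterm := (Finset.sum_eq_sum_iff_of_le
      (fun v _ => jensen_v Q π ρ hQ0 hπ0 hπQ hρ0 v)).1 heq2
    have hedge : ∀ u v, 0 < Q u v → ρ u / π u = ρ v / π v := fun u v h =>
      jensen_v_eq Q π ρ hQ0 hQd hπ0 hπQ hρ0 v (hterm v (Finset.mem_univ v)) u h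
    have hpath : ∀ a b : S, Relation.ReflTransGen (fun a b => 0 < Q a b) a b →
        ρ a / π a = ρ b / π b := by
      intro a b h
      induction h with
      | refl => rfl
      | tail _ h ih => exact ih.trans (hedge _ _ h)
    intro u v h1 _
    exact hpath u v h1
  -- under the constancy condition, ρ is a fixed point
  have hfix : (∀ u v : S, Relation.ReflTransGen (fun a b => 0 < Q a b) u v →
        Relation.ReflTransGen (fun a b => 0 < Q a b) v u →
        ρ u / π u = ρ v / π v) →
      ∀ v, (∑ u, ρ u * Q u v) = ρ v := by
    intro hc v
    have hterm : ∀ u : S, ρ u * Q u v = (π u * Q u v) * (ρ v / π v) := by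
      intro u
      rcases eq_or_lt_of_le (hQ0 u v) with h | h
      · rw [← h]; ring
      · have hF : ρ u / π u = ρ v / π v :=
          hc u v (Relation.ReflTransGen.single h)
            (markov_closed Q π hQ0 hQ1 hπ0 hπQ u v h)
        calc ρ u * Q u v = (π u * (ρ u / π u)) * Q u v := by
              rw [mul_div_cancel₀ _ (hπ0 u).ne']
          _ = (π u * Q u v) * (ρ v / π v) := by rw [hF]; ring
    simp only [hterm]
    rw [← Finset.sum_mul, hπQ v, mul_div_cancel₀ _ (hπ0 v).ne']
  have backward : (∀ u v : S, Relation.ReflTransGen (fun a b => 0 < Q a b) u v →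
        Relation.ReflTransGen (fun a b => 0 < Q a b) v u →
        ρ u / π u = ρ v / π v) →
      ∑ v, (∑ u, ρ u * Q u v) * Real.log ((∑ u, ρ u * Q u v) / π v)
        = ∑ u, ρ u * Real.log (ρ u / π u) := by
    intro hc
    refine Finset.sum_congr rfl fun v _ => ?_
    rw [hfix hc v]
  refine ⟨⟨forward, backward⟩, ?_⟩
  intro hne
  refine lt_of_le_of_ne hle fun heq => hne (funext fun v => hfix (forward heq) v)
end

section
/- Let Ω be a finite set and Q : Ω×Ω×Ω×Ω → ℝ≥0 a kernel with ∑_{τ,τ'} Q(σ,σ';τ,τ') = 1 for all σ,σ', satisfying the symmetries Q(σ,σ';τ,τ') = Q(σ,σ';τ',τ) = Q(σ',σ;τ,τ'), having positive diagonal entries Q(σ,σ';σ,σ') > 0, and balanced with respect to a strictly positive probability measure μ (i.e., ∑_{σ,σ'} μ(σ)μ(σ')Q(σ,σ';τ,τ') = μ(τ)μ(τ')). Then for any probability measure p on Ω that is not a fixed point of the quadratic dynamics p ↦ p∘p, where (p∘p)(τ) = ∑_{σ,σ',τ'} p(σ)p(σ')Q(σ,σ';τ,τ'), one has strict entropy decay: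 D(p∘p ‖ μ) < D(p ‖ μ). -/
open Finset

set_option maxHeartbeats 1000000

private lemma klterm_ge (a c : ℝ) (ha : 0 ≤ a) (hc : 0 ≤ c) (h0 : c = 0 → a = 0) :
    a - c ≤ a * Real.log (a / c) := by
  rcases eq_or_lt_of_le ha with h | h
  · rw [← h]; simpa using hc
  · have hc0 : 0 < c := by
      rcases eq_or_lt_of_le hc with h' | h'
      · exact absurd (h0 h'.symm) (by intro hz; rw [hz] at h; exact lt_irrefl _ h)
      · exact h'
    have hlog : Real.log (c / a) ≤ c / a - 1 :=
      Real.log_le_sub_one_of_pos (by positivity)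
    have hld : Real.log (c / a) = - Real.log (a / c) := by
      rw [← Real.log_inv]; congr 1; rw [inv_div]
    rw [hld] at hlog
    have h2 : a * (-Real.log (a / c)) ≤ a * (c / a - 1) :=
      mul_le_mul_of_nonneg_left hlog (le_of_lt h)
    have h3 : a * (c / a - 1) = c - a := by field_simp
    nlinarith

private lemma klterm_gt (a c : ℝ) (ha : 0 ≤ a) (hc : 0 ≤ c) (h0 : c = 0 → a = 0)
    (hne : a ≠ c) : a - c < a * Real.log (a / c) := by
  rcases eq_or_lt_of_le ha with h | h
  · rw [← h]
    have hcne : c ≠ 0 := fun hz => hne (by rw [← h, hz])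
    have : 0 < c := lt_of_le_of_ne hc (Ne.symm hcne)
    simpa using this
  · have hc0 : 0 < c := by
      rcases eq_or_lt_of_le hc with h' | h'
      · exact absurd (h0 h'.symm) (by intro hz; rw [hz] at h; exact lt_irrefl _ h)
      · exact h'
    have hne1 : c / a ≠ 1 := by
      intro hh
      exact hne ((div_eq_one_iff_eq (ne_of_gt h)).mp hh).symm
    have hlog : Real.log (c / a) < c / a - 1 :=
      Real.log_lt_sub_one_of_pos (by positivity) hne1
    have hld : Real.log (c / a) = - Real.log (a / c) := by
      rw [← Real.log_inv]; congr 1; rw [inv_div]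
    rw [hld] at hlog
    have h2 : a * (-Real.log (a / c)) < a * (c / a - 1) :=
      mul_lt_mul_of_pos_left hlog h
    have h3 : a * (c / a - 1) = c - a := by field_simp
    nlinarith

private lemma sum4_swap {α : Type*} [Fintype α] (f : α → α → α → α → ℝ) :
    ∑ a, ∑ b, ∑ c, ∑ d, f a b c d = ∑ c, ∑ d, ∑ a, ∑ b, f a b c d := by
  have h1 : ∀ a : α, ∑ b, ∑ c, ∑ d, f a b c d = ∑ c, ∑ d, ∑ b, f a b c d := by
    intro a
    rw [Finset.sum_comm]
    exact Finset.sum_congr rfl fun c _ => Finset.sum_comm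
  simp_rw [h1]
  rw [Finset.sum_comm]
  exact Finset.sum_congr rfl fun c _ => Finset.sum_comm

/-- strict entropy decay for the quadratic mass-action dynamics
with a normalized, symmetric, positive-diagonal, balanced kernel. -/
theorem strict_entropy_decay {Ω : Type*} [Fintype Ω]
    (Q : Ω → Ω → Ω → Ω → ℝ) (μ p : Ω → ℝ)
    (hQ0 : ∀ σ σ' τ τ', 0 ≤ Q σ σ' τ τ')
    (hQ1 : ∀ σ σ', ∑ τ, ∑ τ', Q σ σ' τ τ' = 1)
    (hsym1 : ∀ σ σ' τ τ', Q σ σ' τ τ' = Q σ σ' τ' τ)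
    (hsym2 : ∀ σ σ' τ τ', Q σ σ' τ τ' = Q σ' σ τ τ')
    (hdiag : ∀ σ σ', 0 < Q σ σ' σ σ')
    (hμ0 : ∀ σ, 0 < μ σ) (hμ1 : ∑ σ, μ σ = 1)
    (hbal : ∀ τ τ', ∑ σ, ∑ σ', μ σ * μ σ' * Q σ σ' τ τ' = μ τ * μ τ')
    (hp0 : ∀ σ, 0 ≤ p σ) (hp1 : ∑ σ, p σ = 1)
    (hnotfix : (fun τ => ∑ σ, ∑ σ', ∑ τ', p σ * p σ' * Q σ σ' τ τ') ≠ p) :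
    ∑ τ, (∑ σ, ∑ σ', ∑ τ', p σ * p σ' * Q σ σ' τ τ') *
        Real.log ((∑ σ, ∑ σ', ∑ τ', p σ * p σ' * Q σ σ' τ τ') / μ τ)
      < ∑ σ, p σ * Real.log (p σ / μ σ) := by
  classical
  set P : Ω → Ω → ℝ := fun τ τ' => ∑ σ, ∑ σ', p σ * p σ' * Q σ σ' τ τ' with hPdef
  set q : Ω → ℝ := fun τ => ∑ τ', P τ τ' with hqdef
  have hP0 : ∀ τ τ', 0 ≤ P τ τ' := fun τ τ' =>
    Finset.sum_nonneg fun σ _ => Finset.sum_nonneg fun σ' _ =>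
      mul_nonneg (mul_nonneg (hp0 σ) (hp0 σ')) (hQ0 σ σ' τ τ')
  have hPsym : ∀ τ τ', P τ τ' = P τ' τ := by
    intro τ τ'
    simp only [hPdef]
    exact Finset.sum_congr rfl fun σ _ => Finset.sum_congr rfl fun σ' _ => by
      rw [hsym1]
  have hq0 : ∀ τ, 0 ≤ q τ := fun τ => Finset.sum_nonneg fun τ' _ => hP0 τ τ'
  have hPq : ∀ τ τ', P τ τ' ≤ q τ := fun τ τ' =>
    Finset.single_le_sum (fun i _ => hP0 τ i) (Finset.mem_univ τ')
  have hPq' : ∀ τ τ', P τ τ' ≤ q τ' := by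
    intro τ τ'
    rw [hPsym]; exact hPq τ' τ
  -- the goal's one-step distribution equals q
  have hgoalq : ∀ τ, (∑ σ, ∑ σ', ∑ τ', p σ * p σ' * Q σ σ' τ τ') = q τ := by
    intro τ
    simp only [hqdef, hPdef]
    calc ∑ σ, ∑ σ', ∑ τ', p σ * p σ' * Q σ σ' τ τ'
        = ∑ σ, ∑ τ', ∑ σ', p σ * p σ' * Q σ σ' τ τ' :=
          Finset.sum_congr rfl fun σ _ => Finset.sum_comm
      _ = ∑ τ', ∑ σ, ∑ σ', p σ * p σ' * Q σ σ' τ τ' := Finset.sum_comm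
  -- total mass of P is 1
  have hPsum : ∑ τ, ∑ τ', P τ τ' = 1 := by
    simp only [hPdef]
    rw [sum4_swap (fun τ τ' σ σ' => p σ * p σ' * Q σ σ' τ τ')]
    have h1 : ∀ σ σ' : Ω, ∑ τ, ∑ τ', p σ * p σ' * Q σ σ' τ τ' = p σ * p σ' := by
      intro σ σ'
      simp_rw [← Finset.mul_sum]
      rw [hQ1, mul_one]
    simp_rw [h1]
    rw [← Finset.sum_mul_sum, hp1, mul_one]
  have hq1 : ∑ τ, q τ = 1 := by simp only [hqdef]; exact hPsum
  -- Step 3 : the two-variable entropy of p⊗p is twice that of p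
  have hS1 : ∑ σ, ∑ σ', p σ * p σ' * Real.log (p σ * p σ' / (μ σ * μ σ'))
      = 2 * ∑ σ, p σ * Real.log (p σ / μ σ) := by
    have hsplit : ∀ σ σ', p σ * p σ' * Real.log (p σ * p σ' / (μ σ * μ σ'))
        = p σ * p σ' * Real.log (p σ / μ σ) + p σ * p σ' * Real.log (p σ' / μ σ') := by
      intro σ σ'
      rcases eq_or_lt_of_le (hp0 σ) with h1 | h1
      · rw [← h1]; simp
      rcases eq_or_lt_of_le (hp0 σ') with h2 | h2
      · rw [← h2]; simp
      have e : p σ * p σ' / (μ σ * μ σ') = (p σ / μ σ) * (p σ' / μ σ') := by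
        field_simp [(hμ0 σ).ne', (hμ0 σ').ne']
      rw [e, Real.log_mul (ne_of_gt (div_pos h1 (hμ0 σ))) (ne_of_gt (div_pos h2 (hμ0 σ')))]
      ring
    simp_rw [hsplit, Finset.sum_add_distrib]
    have hA : ∑ σ, ∑ σ', p σ * p σ' * Real.log (p σ / μ σ)
        = ∑ σ, p σ * Real.log (p σ / μ σ) := by
      apply Finset.sum_congr rfl
      intro σ _
      have : (∑ σ', p σ * p σ' * Real.log (p σ / μ σ))
          = (∑ σ', p σ') * (p σ * Real.log (p σ / μ σ)) := by
        rw [Finset.sum_mul]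
        exact Finset.sum_congr rfl fun σ' _ => by ring
      rw [this, hp1, one_mul]
    have hB : ∑ σ, ∑ σ', p σ * p σ' * Real.log (p σ' / μ σ')
        = ∑ σ, p σ * Real.log (p σ / μ σ) := by
      rw [Finset.sum_comm]
      apply Finset.sum_congr rfl
      intro σ' _
      have : (∑ σ, p σ * p σ' * Real.log (p σ' / μ σ'))
          = (∑ σ, p σ) * (p σ' * Real.log (p σ' / μ σ')) := by
        rw [Finset.sum_mul]
        exact Finset.sum_congr rfl fun σ _ => by ring
      rw [this, hp1, one_mul]
    rw [hA, hB]; ring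
  -- Step 2 : data-processing inequality, with strictness from the positive diagonal
  set F : Ω → Ω → ℝ := fun τ τ' =>
    ∑ σ, ∑ σ', p σ * p σ' * Q σ σ' τ τ' * Real.log (p σ * p σ' / (μ σ * μ σ')) with hFdef
  have claim2 : ∀ τ τ',
      (P τ τ' * Real.log (P τ τ' / (μ τ * μ τ')) ≤ F τ τ') ∧
      (p τ * p τ' ≠ P τ τ' →
        P τ τ' * Real.log (P τ τ' / (μ τ * μ τ')) < F τ τ') := by
    intro τ τ'
    by_cases hz : P τ τ' = 0
    · have hzero : ∀ σ σ', p σ * p σ' * Q σ σ' τ τ' = 0 := by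
        have hz' : ∑ σ, ∑ σ', p σ * p σ' * Q σ σ' τ τ' = 0 := hz
        intro σ σ'
        have h1 := (Finset.sum_eq_zero_iff_of_nonneg (fun σ _ =>
          Finset.sum_nonneg fun σ' _ =>
            mul_nonneg (mul_nonneg (hp0 σ) (hp0 σ')) (hQ0 σ σ' τ τ'))).mp hz' σ
          (Finset.mem_univ σ)
        exact (Finset.sum_eq_zero_iff_of_nonneg (fun σ' _ =>
          mul_nonneg (mul_nonneg (hp0 σ) (hp0 σ')) (hQ0 σ σ' τ τ'))).mp h1 σ'
          (Finset.mem_univ σ')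
      have hF0 : F τ τ' = 0 := by
        simp only [hFdef]
        exact Finset.sum_eq_zero fun σ _ => Finset.sum_eq_zero fun σ' _ => by
          rw [hzero, zero_mul]
      constructor
      · rw [hz, hF0, zero_mul]
      · intro hne
        exfalso
        have h1 := hzero τ τ'
        have hQd := hdiag τ τ'
        have hpp : p τ * p τ' = 0 := by
          rcases mul_eq_zero.mp h1 with h | h
          · exact h
          · exact absurd h (ne_of_gt hQd)
        exact hne (by rw [hpp, hz])
    · have hPpos : 0 < P τ τ' := lt_of_le_of_ne (hP0 τ τ') (Ne.symm hz)
      have hμτ := hμ0 τ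
      have hμτ' := hμ0 τ'
      set r : ℝ := P τ τ' / (μ τ * μ τ') with hrdef
      have hr : 0 < r := div_pos hPpos (mul_pos hμτ hμτ')
      have hμμr : μ τ * μ τ' * r = P τ τ' := by
        rw [hrdef]; field_simp
      -- pointwise facts
      have hc0 : ∀ σ σ', μ σ * μ σ' * Q σ σ' τ τ' * r = 0 →
          p σ * p σ' * Q σ σ' τ τ' = 0 := by
        intro σ σ' h
        have hQz : Q σ σ' τ τ' = 0 := by
          by_contra hQz
          have hQp : 0 < Q σ σ' τ τ' := lt_of_le_of_ne (hQ0 σ σ' τ τ') (Ne.symm hQz)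
          have : 0 < μ σ * μ σ' * Q σ σ' τ τ' * r :=
            mul_pos (mul_pos (mul_pos (hμ0 σ) (hμ0 σ')) hQp) hr
          linarith [this, h.le]
        rw [hQz, mul_zero]
      have hcnn : ∀ σ σ', 0 ≤ μ σ * μ σ' * Q σ σ' τ τ' * r := fun σ σ' => by
        have := hQ0 σ σ' τ τ'
        have := (hμ0 σ).le
        have := (hμ0 σ').le
        positivity
      have hann : ∀ σ σ', 0 ≤ p σ * p σ' * Q σ σ' τ τ' := fun σ σ' =>
        mul_nonneg (mul_nonneg (hp0 σ) (hp0 σ')) (hQ0 σ σ' τ τ')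
      -- log identity
      have hkey : ∀ σ σ',
          p σ * p σ' * Q σ σ' τ τ' *
            Real.log (p σ * p σ' * Q σ σ' τ τ' / (μ σ * μ σ' * Q σ σ' τ τ' * r))
          = p σ * p σ' * Q σ σ' τ τ' * Real.log (p σ * p σ' / (μ σ * μ σ'))
            - p σ * p σ' * Q σ σ' τ τ' * Real.log r := by
        intro σ σ'
        by_cases ha : p σ * p σ' * Q σ σ' τ τ' = 0
        · rw [ha]; ring
        · have hQpos : 0 < Q σ σ' τ τ' := by
            rcases eq_or_lt_of_le (hQ0 σ σ' τ τ') with h | h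
            · exact absurd (by rw [← h, mul_zero]) ha
            · exact h
          have hpp : 0 < p σ * p σ' := by
            rcases eq_or_lt_of_le (mul_nonneg (hp0 σ) (hp0 σ')) with h | h
            · exact absurd (by rw [← h, zero_mul]) ha
            · exact h
          have hdivid : p σ * p σ' * Q σ σ' τ τ' / (μ σ * μ σ' * Q σ σ' τ τ' * r)
              = (p σ * p σ' / (μ σ * μ σ')) / r := by
            field_simp [(hμ0 σ).ne', (hμ0 σ').ne', hQpos.ne', hr.ne']
          rw [hdivid, Real.log_div (ne_of_gt (div_pos hpp (mul_pos (hμ0 σ) (hμ0 σ')))) hr.ne']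
          ring
      -- the sums
      have hsum_a : ∑ σ, ∑ σ', p σ * p σ' * Q σ σ' τ τ' = P τ τ' := rfl
      have hsum_c : ∑ σ, ∑ σ', μ σ * μ σ' * Q σ σ' τ τ' * r = P τ τ' := by
        have : ∑ σ, ∑ σ', μ σ * μ σ' * Q σ σ' τ τ' * r
            = (∑ σ, ∑ σ', μ σ * μ σ' * Q σ σ' τ τ') * r := by
          rw [Finset.sum_mul]
          exact Finset.sum_congr rfl fun σ _ => by rw [Finset.sum_mul]
        rw [this, hbal, hμμr]
      have hlogsum : ∑ σ, ∑ σ',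
          p σ * p σ' * Q σ σ' τ τ' *
            Real.log (p σ * p σ' * Q σ σ' τ τ' / (μ σ * μ σ' * Q σ σ' τ τ' * r))
          = F τ τ' - P τ τ' * Real.log r := by
        simp_rw [hkey]
        simp_rw [Finset.sum_sub_distrib]
        have hB : ∑ σ, ∑ σ', p σ * p σ' * Q σ σ' τ τ' * Real.log r
            = P τ τ' * Real.log r := by
          have : ∑ σ, ∑ σ', p σ * p σ' * Q σ σ' τ τ' * Real.log r
              = (∑ σ, ∑ σ', p σ * p σ' * Q σ σ' τ τ') * Real.log r := by
            rw [Finset.sum_mul]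
            exact Finset.sum_congr rfl fun σ _ => by rw [Finset.sum_mul]
          rw [this, hsum_a]
        rw [hB]
      have hdiffzero : ∑ σ, ∑ σ',
          (p σ * p σ' * Q σ σ' τ τ' - μ σ * μ σ' * Q σ σ' τ τ' * r) = 0 := by
        simp_rw [Finset.sum_sub_distrib]
        rw [hsum_a, hsum_c, sub_self]
      have hlhs_eq : P τ τ' * Real.log (P τ τ' / (μ τ * μ τ')) = P τ τ' * Real.log r := by
        rw [hrdef]
      constructor
      · have hle : ∑ σ, ∑ σ',
            (p σ * p σ' * Q σ σ' τ τ' - μ σ * μ σ' * Q σ σ' τ τ' * r)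
            ≤ ∑ σ, ∑ σ', p σ * p σ' * Q σ σ' τ τ' *
              Real.log (p σ * p σ' * Q σ σ' τ τ' / (μ σ * μ σ' * Q σ σ' τ τ' * r)) := by
          apply Finset.sum_le_sum
          intro σ _
          apply Finset.sum_le_sum
          intro σ' _
          exact klterm_ge _ _ (hann σ σ') (hcnn σ σ') (hc0 σ σ')
        rw [hdiffzero, hlogsum] at hle
        rw [hlhs_eq]
        linarith
      · intro hne
        have hane : p τ * p τ' * Q τ τ' τ τ' ≠ μ τ * μ τ' * Q τ τ' τ τ' * r := by
          intro h
          apply hne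
          have hQd := (hdiag τ τ').ne'
          have h2 : p τ * p τ' * Q τ τ' τ τ' = P τ τ' * Q τ τ' τ τ' := by
            rw [h, ← hμμr]; ring
          exact mul_right_cancel₀ hQd h2
        have hlt : ∑ σ, ∑ σ',
            (p σ * p σ' * Q σ σ' τ τ' - μ σ * μ σ' * Q σ σ' τ τ' * r)
            < ∑ σ, ∑ σ', p σ * p σ' * Q σ σ' τ τ' *
              Real.log (p σ * p σ' * Q σ σ' τ τ' / (μ σ * μ σ' * Q σ σ' τ τ' * r)) := by
          apply Finset.sum_lt_sum
          · intro σ _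
            apply Finset.sum_le_sum
            intro σ' _
            exact klterm_ge _ _ (hann σ σ') (hcnn σ σ') (hc0 σ σ')
          · refine ⟨τ, Finset.mem_univ τ, ?_⟩
            apply Finset.sum_lt_sum
            · intro σ' _
              exact klterm_ge _ _ (hann τ σ') (hcnn τ σ') (hc0 τ σ')
            · exact ⟨τ', Finset.mem_univ τ',
                klterm_gt _ _ (hann τ τ') (hcnn τ τ') (hc0 τ τ') hane⟩
        rw [hdiffzero, hlogsum] at hlt
        rw [hlhs_eq]
        linarith
  -- the total of F is the two-variable entropy of p⊗p
  have hFsum : ∑ τ, ∑ τ', F τ τ'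
      = ∑ σ, ∑ σ', p σ * p σ' * Real.log (p σ * p σ' / (μ σ * μ σ')) := by
    simp only [hFdef]
    rw [sum4_swap (fun τ τ' σ σ' =>
      p σ * p σ' * Q σ σ' τ τ' * Real.log (p σ * p σ' / (μ σ * μ σ')))]
    apply Finset.sum_congr rfl
    intro σ _
    apply Finset.sum_congr rfl
    intro σ' _
    have h1 : ∀ τ τ' : Ω, p σ * p σ' * Q σ σ' τ τ' * Real.log (p σ * p σ' / (μ σ * μ σ'))
        = p σ * p σ' * Real.log (p σ * p σ' / (μ σ * μ σ')) * Q σ σ' τ τ' := by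
      intro τ τ'; ring
    simp_rw [h1, ← Finset.mul_sum]
    rw [hQ1, mul_one]
  -- p ⊗ p is not equal to P somewhere
  have claimD : ∃ τ τ', p τ * p τ' ≠ P τ τ' := by
    by_contra h
    push_neg at h
    apply hnotfix
    funext τ
    rw [hgoalq τ]
    show (∑ τ', P τ τ') = p τ
    calc ∑ τ', P τ τ' = ∑ τ', p τ * p τ' :=
          Finset.sum_congr rfl fun τ' _ => (h τ τ').symm
      _ = p τ * ∑ τ', p τ' := by rw [Finset.mul_sum]
      _ = p τ := by rw [hp1, mul_one]
  -- Step 2 conclusion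
  have hstep2 : ∑ τ, ∑ τ', P τ τ' * Real.log (P τ τ' / (μ τ * μ τ'))
      < 2 * ∑ σ, p σ * Real.log (p σ / μ σ) := by
    obtain ⟨τ₀, τ₀', hne⟩ := claimD
    have h1 : ∑ τ, ∑ τ', P τ τ' * Real.log (P τ τ' / (μ τ * μ τ'))
        < ∑ τ, ∑ τ', F τ τ' := by
      apply Finset.sum_lt_sum
      · intro τ _
        exact Finset.sum_le_sum fun τ' _ => (claim2 τ τ').1
      · refine ⟨τ₀, Finset.mem_univ τ₀, ?_⟩
        apply Finset.sum_lt_sum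
        · intro τ' _
          exact (claim2 τ₀ τ').1
        · exact ⟨τ₀', Finset.mem_univ τ₀', (claim2 τ₀ τ₀').2 hne⟩
    rw [hFsum, hS1] at h1
    exact h1
  -- Step 1 : superadditivity of entropy w.r.t. the marginals
  have hsplitP : ∀ τ τ', P τ τ' * Real.log (P τ τ' / (μ τ * μ τ'))
      = P τ τ' * Real.log (P τ τ' / (q τ * q τ'))
        + P τ τ' * Real.log (q τ / μ τ) + P τ τ' * Real.log (q τ' / μ τ') := by
    intro τ τ'
    by_cases hz : P τ τ' = 0
    · rw [hz]; ring
    · have hPpos : 0 < P τ τ' := lt_of_le_of_ne (hP0 τ τ') (Ne.symm hz)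
      have hqτ : 0 < q τ := lt_of_lt_of_le hPpos (hPq τ τ')
      have hqτ' : 0 < q τ' := lt_of_lt_of_le hPpos (hPq' τ τ')
      rw [Real.log_div hz (ne_of_gt (mul_pos (hμ0 τ) (hμ0 τ'))),
        Real.log_div hz (ne_of_gt (mul_pos hqτ hqτ')),
        Real.log_div hqτ.ne' (hμ0 τ).ne', Real.log_div hqτ'.ne' (hμ0 τ').ne',
        Real.log_mul (hμ0 τ).ne' (hμ0 τ').ne', Real.log_mul hqτ.ne' hqτ'.ne']
      ring
  have hgibbs : 0 ≤ ∑ τ, ∑ τ', P τ τ' * Real.log (P τ τ' / (q τ * q τ')) := by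
    have hle : ∑ τ, ∑ τ', (P τ τ' - q τ * q τ')
        ≤ ∑ τ, ∑ τ', P τ τ' * Real.log (P τ τ' / (q τ * q τ')) := by
      apply Finset.sum_le_sum
      intro τ _
      apply Finset.sum_le_sum
      intro τ' _
      apply klterm_ge _ _ (hP0 τ τ') (mul_nonneg (hq0 τ) (hq0 τ'))
      intro h
      rcases mul_eq_zero.mp h with h | h
      · have := hPq τ τ'; have := hP0 τ τ'; linarith [h ▸ this]
      · have := hPq' τ τ'; have := hP0 τ τ'; linarith [h ▸ this]
    have heq : ∑ τ, ∑ τ', (P τ τ' - q τ * q τ') = 0 := by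
      simp_rw [Finset.sum_sub_distrib]
      rw [hPsum]
      have : ∑ τ, ∑ τ', q τ * q τ' = (∑ τ, q τ) * (∑ τ', q τ') := by
        rw [Finset.sum_mul_sum]
      rw [this, hq1, mul_one, sub_self]
    linarith
  have hm1 : ∑ τ, ∑ τ', P τ τ' * Real.log (q τ / μ τ)
      = ∑ τ, q τ * Real.log (q τ / μ τ) := by
    apply Finset.sum_congr rfl
    intro τ _
    rw [← Finset.sum_mul]
  have hm2 : ∑ τ, ∑ τ', P τ τ' * Real.log (q τ' / μ τ')
      = ∑ τ, q τ * Real.log (q τ / μ τ) := by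
    rw [Finset.sum_comm]
    apply Finset.sum_congr rfl
    intro τ' _
    have : ∑ τ, P τ τ' = q τ' := by
      show ∑ τ, P τ τ' = ∑ τ, P τ' τ
      exact Finset.sum_congr rfl fun τ _ => hPsym τ τ'
    rw [← Finset.sum_mul, this]
  have hstep1 : 2 * ∑ τ, q τ * Real.log (q τ / μ τ)
      ≤ ∑ τ, ∑ τ', P τ τ' * Real.log (P τ τ' / (μ τ * μ τ')) := by
    have : ∑ τ, ∑ τ', P τ τ' * Real.log (P τ τ' / (μ τ * μ τ'))
        = (∑ τ, ∑ τ', P τ τ' * Real.log (P τ τ' / (q τ * q τ')))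
          + (∑ τ, ∑ τ', P τ τ' * Real.log (q τ / μ τ))
          + (∑ τ, ∑ τ', P τ τ' * Real.log (q τ' / μ τ')) := by
      simp_rw [hsplitP, Finset.sum_add_distrib]
    rw [this, hm1, hm2]
    linarith
  -- conclusion
  have hgoal_eq : ∑ τ, (∑ σ, ∑ σ', ∑ τ', p σ * p σ' * Q σ σ' τ τ') *
        Real.log ((∑ σ, ∑ σ', ∑ τ', p σ * p σ' * Q σ σ' τ τ') / μ τ)
      = ∑ τ, q τ * Real.log (q τ / μ τ) :=
    Finset.sum_congr rfl fun τ _ => by rw [hgoalq τ]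
  rw [hgoal_eq]
  linarith
end

section
/- For a balanced kernel Q on a finite set Ω satisfying the stated symmetries and positive diagonal condition, a probability measure p on Ω is a fixed point of the quadratic dynamics p ↦ p∘p if and only if the product measure p⊗p on Ω×Ω is invariant under the Markov transition matrix Q, i.e., ∑_{σ,σ'} p(σ)p(σ')Q(σ,σ';τ,τ') = p(τ)p(τ') for all τ,τ'. -/
open Real Finset

/-- Gibbs' inequality, equality case: if the relative entropy of `a` w.r.t. `b`
is nonpositive, then `a = b`. -/
lemma gibbs_eq {ι : Type*} [Fintype ι] (a b : ι → ℝ)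
    (ha : ∀ i, 0 ≤ a i) (hb : ∀ i, 0 ≤ b i)
    (hsa : ∑ i, a i = 1) (hsb : ∑ i, b i = 1)
    (hab : ∀ i, b i = 0 → a i = 0)
    (h : ∑ i, a i * Real.log (a i / b i) ≤ 0) :
    ∀ i, a i = b i := by
  classical
  set S : Finset ι := Finset.univ.filter (fun i => a i ≠ 0) with hS
  have haS : ∀ i ∈ S, 0 < a i := by
    intro i hi
    have : a i ≠ 0 := by simpa [hS] using hi
    exact lt_of_le_of_ne (ha i) (Ne.symm this)
  have hbS : ∀ i ∈ S, 0 < b i := by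
    intro i hi
    have hai : a i ≠ 0 := by simpa [hS] using hi
    rcases (hb i).lt_or_eq with h' | h'
    · exact h'
    · exact absurd (hab i h'.symm) hai
  have hSa : ∑ i ∈ S, a i = 1 := by
    rw [← hsa]
    apply Finset.sum_subset (Finset.subset_univ S)
    intro i _ hi
    by_contra hne
    exact hi (by simp [hS, hne])
  have hST : ∑ i ∈ S, a i * Real.log (a i / b i)
      = ∑ i, a i * Real.log (a i / b i) := by
    apply Finset.sum_subset (Finset.subset_univ S)
    intro i _ hi
    have : a i = 0 := by by_contra hne; exact hi (by simp [hS, hne])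
    simp [this]
  -- the per-term nonnegative defect
  set g : ι → ℝ := fun i => (b i - a i) - a i * Real.log (b i / a i) with hg
  have hg0 : ∀ i ∈ S, 0 ≤ g i := by
    intro i hi
    have hai := haS i hi
    have hbi := hbS i hi
    have hlog := Real.log_le_sub_one_of_pos (div_pos hbi hai)
    have := mul_le_mul_of_nonneg_left hlog (le_of_lt hai)
    have hcalc : a i * (b i / a i - 1) = b i - a i := by
      field_simp
    simp only [hg]
    nlinarith [this, hcalc]
  have hlogflip : ∀ i ∈ S, a i * Real.log (b i / a i)
      = -(a i * Real.log (a i / b i)) := by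
    intro i hi
    have hai := (haS i hi).ne'
    have hbi := (hbS i hi).ne'
    rw [Real.log_div hbi hai, Real.log_div hai hbi]
    ring
  have hgsum : ∑ i ∈ S, g i
      = (∑ i ∈ S, b i) - 1 + ∑ i, a i * Real.log (a i / b i) := by
    rw [← hST]
    simp only [hg]
    rw [Finset.sum_sub_distrib, Finset.sum_sub_distrib, hSa,
      Finset.sum_congr rfl hlogflip, Finset.sum_neg_distrib]
    ring
  have hSb_le : ∑ i ∈ S, b i ≤ 1 := by
    rw [← hsb]
    exact Finset.sum_le_sum_of_subset_of_nonneg (Finset.subset_univ S)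
      (fun i _ _ => hb i)
  have hgsum_nonneg : 0 ≤ ∑ i ∈ S, g i := Finset.sum_nonneg hg0
  have hSb : ∑ i ∈ S, b i = 1 := by
    have := hgsum_nonneg
    rw [hgsum] at this
    linarith
  have hgsum0 : ∑ i ∈ S, g i = 0 := by
    rw [hgsum, hSb]
    linarith
  have hgall : ∀ i ∈ S, g i = 0 :=
    (Finset.sum_eq_zero_iff_of_nonneg hg0).mp hgsum0
  -- on S, a = b
  have habS : ∀ i ∈ S, a i = b i := by
    intro i hi
    by_contra hne
    have hai := haS i hi
    have hbi := hbS i hi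
    have hdiv : b i / a i ≠ 1 := by
      intro hcontra
      exact hne ((div_eq_one_iff_eq hai.ne').mp hcontra).symm
    have hlog := Real.log_lt_sub_one_of_pos (div_pos hbi hai) hdiv
    have := mul_lt_mul_of_pos_left hlog hai
    have hcalc : a i * (b i / a i - 1) = b i - a i := by field_simp
    have : 0 < g i := by simp only [hg]; nlinarith
    exact this.ne' (hgall i hi)
  -- off S, both are 0
  have hoff : ∑ i ∈ Sᶜ, b i = 0 := by
    have := Finset.sum_add_sum_compl S b
    rw [hSb, hsb] at this
    linarith
  have hboff : ∀ i ∈ Sᶜ, b i = 0 :=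
    (Finset.sum_eq_zero_iff_of_nonneg (fun i _ => hb i)).mp hoff
  intro i
  by_cases hi : i ∈ S
  · exact habS i hi
  · have hbi : b i = 0 := hboff i (Finset.mem_compl.mpr hi)
    have hai : a i = 0 := by
      by_contra hne
      exact hi (by simp [hS, hne])
    rw [hai, hbi]

/-- pointwise log identity used for the reference-measure term -/
lemma log_split_aux (x y u v : ℝ) (hx : 0 ≤ x) (hy : 0 ≤ y)
    (hu : 0 < u) (hv : 0 < v) :
    (u * v) * ((x * y / (u * v)) * Real.log (x * y / (u * v)))
      = x * y * (Real.log (x / u) + Real.log (y / v)) := by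
  by_cases hx0 : x = 0
  · simp [hx0]
  by_cases hy0 : y = 0
  · simp [hy0]
  have hxp : 0 < x := lt_of_le_of_ne hx (Ne.symm hx0)
  have hyp : 0 < y := lt_of_le_of_ne hy (Ne.symm hy0)
  have h1 : (u * v) * ((x * y / (u * v)) * Real.log (x * y / (u * v)))
      = x * y * Real.log (x * y / (u * v)) := by
    field_simp
  have h2 : x * y / (u * v) = (x / u) * (y / v) := by
    field_simp
  rw [h1, h2, Real.log_mul (div_pos hxp hu).ne' (div_pos hyp hv).ne']

/-- pointwise log identity used for the main term -/
lemma log_split_aux2 (n x y u v : ℝ) (hn : 0 ≤ n) (hnx : n ≤ x) (hny : n ≤ y)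
    (hu : 0 < u) (hv : 0 < v) :
    (u * v) * ((n / (u * v)) * Real.log (n / (u * v)))
      = n * Real.log (n / (x * y))
        + n * (Real.log (x / u) + Real.log (y / v)) := by
  by_cases hn0 : n = 0
  · simp [hn0]
  have hnp : 0 < n := lt_of_le_of_ne hn (Ne.symm hn0)
  have hxp : 0 < x := lt_of_lt_of_le hnp hnx
  have hyp : 0 < y := lt_of_lt_of_le hnp hny
  have h1 : (u * v) * ((n / (u * v)) * Real.log (n / (u * v)))
      = n * Real.log (n / (u * v)) := by field_simp
  rw [h1]
  rw [Real.log_div hn0 (mul_pos hu hv).ne', Real.log_mul hu.ne' hv.ne',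
    Real.log_div hn0 (mul_pos hxp hyp).ne', Real.log_mul hxp.ne' hyp.ne',
    Real.log_div hxp.ne' hu.ne', Real.log_div hyp.ne' hv.ne']
  ring

/-- for a balanced kernel with the stated symmetries and positive
diagonal, p is a fixed point of the quadratic dynamics iff p⊗p is Q-invariant. -/
theorem fixed_point_iff_invariant {Ω : Type*} [Fintype Ω]
    (Q : Ω → Ω → Ω → Ω → ℝ) (μ p : Ω → ℝ)
    (hQ0 : ∀ σ σ' τ τ', 0 ≤ Q σ σ' τ τ')
    (hQ1 : ∀ σ σ', ∑ τ, ∑ τ', Q σ σ' τ τ' = 1)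
    (hsym1 : ∀ σ σ' τ τ', Q σ σ' τ τ' = Q σ σ' τ' τ)
    (hsym2 : ∀ σ σ' τ τ', Q σ σ' τ τ' = Q σ' σ τ τ')
    (hdiag : ∀ σ σ', 0 < Q σ σ' σ σ')
    (hμ0 : ∀ σ, 0 < μ σ) (hμ1 : ∑ σ, μ σ = 1)
    (hbal : ∀ τ τ', ∑ σ, ∑ σ', μ σ * μ σ' * Q σ σ' τ τ' = μ τ * μ τ')
    (hp0 : ∀ σ, 0 ≤ p σ) (hp1 : ∑ σ, p σ = 1) :
    ((fun τ => ∑ σ, ∑ σ', ∑ τ', p σ * p σ' * Q σ σ' τ τ') = p)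
      ↔ (∀ τ τ', ∑ σ, ∑ σ', p σ * p σ' * Q σ σ' τ τ' = p τ * p τ') := by
  classical
  set ν : Ω → Ω → ℝ := fun τ τ' => ∑ σ, ∑ σ', p σ * p σ' * Q σ σ' τ τ' with hν
  have hνnn : ∀ τ τ', 0 ≤ ν τ τ' := fun τ τ' =>
    Finset.sum_nonneg fun σ _ => Finset.sum_nonneg fun σ' _ =>
      mul_nonneg (mul_nonneg (hp0 σ) (hp0 σ')) (hQ0 σ σ' τ τ')
  have hνsymm : ∀ τ τ', ν τ τ' = ν τ' τ := by
    intro τ τ'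
    simp only [hν]
    exact Finset.sum_congr rfl fun σ _ => Finset.sum_congr rfl fun σ' _ => by
      rw [hsym1]
  constructor
  · -- the hard direction: fixed point implies invariance
    intro hfix
    have hfix' : ∀ τ, ∑ σ, ∑ σ', ∑ τ', p σ * p σ' * Q σ σ' τ τ' = p τ :=
      fun τ => congrFun hfix τ
    -- marginals of ν are p
    have hmarg1 : ∀ τ, ∑ τ', ν τ τ' = p τ := by
      intro τ
      rw [← hfix' τ]
      simp only [hν]
      rw [Finset.sum_comm]
      exact Finset.sum_congr rfl fun σ _ => by rw [Finset.sum_comm]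
    have hmarg2 : ∀ τ', ∑ τ, ν τ τ' = p τ' := by
      intro τ'
      calc ∑ τ, ν τ τ' = ∑ τ, ν τ' τ := by
            exact Finset.sum_congr rfl fun τ _ => hνsymm τ τ'
        _ = p τ' := hmarg1 τ'
    have hνle1 : ∀ τ τ', ν τ τ' ≤ p τ := by
      intro τ τ'
      rw [← hmarg1 τ]
      exact Finset.single_le_sum (fun i _ => hνnn τ i) (Finset.mem_univ τ')
    have hνle2 : ∀ τ τ', ν τ τ' ≤ p τ' := by
      intro τ τ'
      rw [hνsymm]; exact hνle1 τ' τ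
    -- Jensen / data processing inequality
    have hA : ∑ τ, ∑ τ', (μ τ * μ τ')
          * ((ν τ τ' / (μ τ * μ τ')) * Real.log (ν τ τ' / (μ τ * μ τ')))
        ≤ ∑ σ, ∑ σ', (μ σ * μ σ')
          * ((p σ * p σ' / (μ σ * μ σ'))
            * Real.log (p σ * p σ' / (μ σ * μ σ'))) := by
      have key : ∀ τ τ', (μ τ * μ τ')
            * ((ν τ τ' / (μ τ * μ τ')) * Real.log (ν τ τ' / (μ τ * μ τ')))
          ≤ ∑ x : Ω × Ω, (μ x.1 * μ x.2 * Q x.1 x.2 τ τ')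
            * ((p x.1 * p x.2 / (μ x.1 * μ x.2))
              * Real.log (p x.1 * p x.2 / (μ x.1 * μ x.2))) := by
        intro τ τ'
        have hm : 0 < μ τ * μ τ' := mul_pos (hμ0 τ) (hμ0 τ')
        set w : Ω × Ω → ℝ :=
          fun x => μ x.1 * μ x.2 * Q x.1 x.2 τ τ' / (μ τ * μ τ') with hw
        set z : Ω × Ω → ℝ :=
          fun x => p x.1 * p x.2 / (μ x.1 * μ x.2) with hz
        have hw0 : ∀ x ∈ (Finset.univ : Finset (Ω × Ω)), 0 ≤ w x := by
          intro x _
          exact div_nonneg (mul_nonneg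
            (mul_nonneg (hμ0 x.1).le (hμ0 x.2).le) (hQ0 x.1 x.2 τ τ')) hm.le
        have hw1 : ∑ x : Ω × Ω, w x = 1 := by
          simp only [hw]
          rw [← Finset.sum_div, Fintype.sum_prod_type]
          rw [hbal τ τ', div_self hm.ne']
        have hzmem : ∀ x ∈ (Finset.univ : Finset (Ω × Ω)),
            z x ∈ Set.Ici (0 : ℝ) := by
          intro x _
          exact div_nonneg (mul_nonneg (hp0 x.1) (hp0 x.2))
            (mul_nonneg (hμ0 x.1).le (hμ0 x.2).le)
        have hjen := Real.convexOn_mul_log.map_sum_le hw0 hw1 hzmem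
        have hwz : ∑ x : Ω × Ω, w x • z x = ν τ τ' / (μ τ * μ τ') := by
          have hpt : ∀ x : Ω × Ω, w x • z x
              = p x.1 * p x.2 * Q x.1 x.2 τ τ' / (μ τ * μ τ') := by
            intro x
            simp only [hw, hz, smul_eq_mul]
            have h1 := (hμ0 x.1).ne'
            have h2 := (hμ0 x.2).ne'
            field_simp
            try ring
          rw [Finset.sum_congr rfl fun x _ => hpt x, ← Finset.sum_div,
            Fintype.sum_prod_type]
          try simp only [hν]
        rw [hwz] at hjen
        calc (μ τ * μ τ')
              * ((ν τ τ' / (μ τ * μ τ')) * Real.log (ν τ τ' / (μ τ * μ τ')))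
            ≤ (μ τ * μ τ') * ∑ x : Ω × Ω, w x • (z x * Real.log (z x)) := by
              exact mul_le_mul_of_nonneg_left hjen hm.le
          _ = ∑ x : Ω × Ω, (μ x.1 * μ x.2 * Q x.1 x.2 τ τ')
              * (z x * Real.log (z x)) := by
              rw [Finset.mul_sum]
              exact Finset.sum_congr rfl fun x _ => by
                simp only [hw, smul_eq_mul]
                have h1 := (hμ0 τ).ne'
                have h2 := (hμ0 τ').ne'
                field_simp
                try ring
      calc ∑ τ, ∑ τ', (μ τ * μ τ')
            * ((ν τ τ' / (μ τ * μ τ')) * Real.log (ν τ τ' / (μ τ * μ τ')))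
          ≤ ∑ τ, ∑ τ', ∑ x : Ω × Ω, (μ x.1 * μ x.2 * Q x.1 x.2 τ τ')
            * ((p x.1 * p x.2 / (μ x.1 * μ x.2))
              * Real.log (p x.1 * p x.2 / (μ x.1 * μ x.2))) := by
            exact Finset.sum_le_sum fun τ _ => Finset.sum_le_sum
              fun τ' _ => key τ τ'
        _ = ∑ x : Ω × Ω, (μ x.1 * μ x.2)
            * ((p x.1 * p x.2 / (μ x.1 * μ x.2))
              * Real.log (p x.1 * p x.2 / (μ x.1 * μ x.2))) := by
            rw [Finset.sum_congr rfl fun τ (_ : τ ∈ Finset.univ) =>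
              (Finset.sum_comm : _)]
            rw [Finset.sum_comm]
            refine Finset.sum_congr rfl fun x _ => ?_
            have factor : ∀ τ τ' : Ω, (μ x.1 * μ x.2 * Q x.1 x.2 τ τ')
                * ((p x.1 * p x.2 / (μ x.1 * μ x.2))
                  * Real.log (p x.1 * p x.2 / (μ x.1 * μ x.2)))
                = Q x.1 x.2 τ τ' * ((μ x.1 * μ x.2)
                  * ((p x.1 * p x.2 / (μ x.1 * μ x.2))
                    * Real.log (p x.1 * p x.2 / (μ x.1 * μ x.2)))) :=
              fun τ τ' => by ring
            rw [Finset.sum_congr rfl fun τ (_ : τ ∈ Finset.univ) =>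
              Finset.sum_congr rfl fun τ' (_ : τ' ∈ Finset.univ) =>
                factor τ τ']
            rw [Finset.sum_congr rfl fun τ (_ : τ ∈ Finset.univ) =>
              (Finset.sum_mul (Finset.univ : Finset Ω)
                (fun τ' => Q x.1 x.2 τ τ') _).symm]
            rw [← Finset.sum_mul, hQ1, one_mul]
        _ = ∑ σ, ∑ σ', (μ σ * μ σ')
            * ((p σ * p σ' / (μ σ * μ σ'))
              * Real.log (p σ * p σ' / (μ σ * μ σ'))) := by
            rw [Fintype.sum_prod_type]
    -- rewrite both sides using log splitting
    set D : ℝ := ∑ σ, p σ * Real.log (p σ / μ σ) with hD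
    have hB : ∑ σ, ∑ σ', (μ σ * μ σ')
          * ((p σ * p σ' / (μ σ * μ σ'))
            * Real.log (p σ * p σ' / (μ σ * μ σ'))) = 2 * D := by
      have : ∀ σ σ', (μ σ * μ σ')
            * ((p σ * p σ' / (μ σ * μ σ'))
              * Real.log (p σ * p σ' / (μ σ * μ σ')))
          = p σ * p σ' * (Real.log (p σ / μ σ) + Real.log (p σ' / μ σ')) :=
        fun σ σ' => log_split_aux _ _ _ _ (hp0 σ) (hp0 σ') (hμ0 σ) (hμ0 σ')
      rw [Finset.sum_congr rfl fun σ _ => Finset.sum_congr rfl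
        fun σ' _ => this σ σ']
      have expand : ∀ σ σ', p σ * p σ'
            * (Real.log (p σ / μ σ) + Real.log (p σ' / μ σ'))
          = p σ * Real.log (p σ / μ σ) * p σ'
            + p σ * (p σ' * Real.log (p σ' / μ σ')) := fun σ σ' => by ring
      rw [Finset.sum_congr rfl fun σ _ => Finset.sum_congr rfl
        fun σ' _ => expand σ σ']
      simp only [Finset.sum_add_distrib, ← Finset.mul_sum, ← Finset.sum_mul]
      rw [hp1, ← hD]
      ring
    have hC : ∑ τ, ∑ τ', (μ τ * μ τ')
          * ((ν τ τ' / (μ τ * μ τ')) * Real.log (ν τ τ' / (μ τ * μ τ')))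
        = (∑ τ, ∑ τ', ν τ τ' * Real.log (ν τ τ' / (p τ * p τ'))) + 2 * D := by
      have : ∀ τ τ', (μ τ * μ τ')
            * ((ν τ τ' / (μ τ * μ τ')) * Real.log (ν τ τ' / (μ τ * μ τ')))
          = ν τ τ' * Real.log (ν τ τ' / (p τ * p τ'))
            + ν τ τ' * (Real.log (p τ / μ τ) + Real.log (p τ' / μ τ')) :=
        fun τ τ' => log_split_aux2 _ _ _ _ _ (hνnn τ τ') (hνle1 τ τ')
          (hνle2 τ τ') (hμ0 τ) (hμ0 τ')
      rw [Finset.sum_congr rfl fun τ _ => Finset.sum_congr rfl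
        fun τ' _ => this τ τ']
      have expand : ∀ τ τ', ν τ τ' * Real.log (ν τ τ' / (p τ * p τ'))
            + ν τ τ' * (Real.log (p τ / μ τ) + Real.log (p τ' / μ τ'))
          = ν τ τ' * Real.log (ν τ τ' / (p τ * p τ'))
            + (Real.log (p τ / μ τ) * ν τ τ'
              + ν τ τ' * Real.log (p τ' / μ τ')) := fun τ τ' => by ring
      rw [Finset.sum_congr rfl fun τ _ => Finset.sum_congr rfl
        fun τ' _ => expand τ τ']
      simp only [Finset.sum_add_distrib]
      congr 1
      have e1 : ∑ τ, ∑ τ', Real.log (p τ / μ τ) * ν τ τ' = D := by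
        rw [Finset.sum_congr rfl fun τ (_ : τ ∈ Finset.univ) =>
          (Finset.mul_sum Finset.univ (fun τ' => ν τ τ')
            (Real.log (p τ / μ τ))).symm]
        rw [hD]
        exact Finset.sum_congr rfl fun τ _ => by rw [hmarg1 τ, mul_comm]
      have e2 : ∑ τ, ∑ τ', ν τ τ' * Real.log (p τ' / μ τ') = D := by
        rw [Finset.sum_comm]
        rw [Finset.sum_congr rfl fun τ' (_ : τ' ∈ Finset.univ) =>
          (Finset.sum_mul Finset.univ (fun τ => ν τ τ')
            (Real.log (p τ' / μ τ'))).symm]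
        rw [hD]
        exact Finset.sum_congr rfl fun τ' _ => by rw [hmarg2 τ']
      rw [e1, e2]
      ring
    -- deduce that the relative entropy of ν w.r.t. p⊗p is ≤ 0
    have hT : ∑ τ, ∑ τ', ν τ τ' * Real.log (ν τ τ' / (p τ * p τ')) ≤ 0 := by
      rw [hC, hB] at hA
      linarith
    -- apply the Gibbs equality case on Ω × Ω
    have hsa : ∑ x : Ω × Ω, ν x.1 x.2 = 1 := by
      rw [Fintype.sum_prod_type]
      rw [Finset.sum_congr rfl fun τ (_ : τ ∈ Finset.univ) => hmarg1 τ]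
      exact hp1
    have hsb : ∑ x : Ω × Ω, p x.1 * p x.2 = 1 := by
      rw [Fintype.sum_prod_type]
      simp only [← Finset.mul_sum, hp1, mul_one]
      try exact hp1
    have hab : ∀ x : Ω × Ω, p x.1 * p x.2 = 0 → ν x.1 x.2 = 0 := by
      intro x hx
      rcases mul_eq_zero.mp hx with h0 | h0
      · exact le_antisymm (by rw [← h0]; exact hνle1 x.1 x.2) (hνnn x.1 x.2)
      · exact le_antisymm (by rw [← h0]; exact hνle2 x.1 x.2) (hνnn x.1 x.2)
    have hTsum : ∑ x : Ω × Ω,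
        ν x.1 x.2 * Real.log (ν x.1 x.2 / (p x.1 * p x.2)) ≤ 0 := by
      rw [Fintype.sum_prod_type]
      exact hT
    have := gibbs_eq (fun x : Ω × Ω => ν x.1 x.2)
      (fun x : Ω × Ω => p x.1 * p x.2)
      (fun x => hνnn x.1 x.2) (fun x => mul_nonneg (hp0 x.1) (hp0 x.2))
      hsa hsb hab hTsum
    intro τ τ'
    exact this (τ, τ')
  · -- easy direction: invariance implies fixed point
    intro hinv
    funext τ
    have swap : ∑ σ, ∑ σ', ∑ τ', p σ * p σ' * Q σ σ' τ τ'
        = ∑ τ', ∑ σ, ∑ σ', p σ * p σ' * Q σ σ' τ τ' := by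
      rw [Finset.sum_congr rfl fun σ (_ : σ ∈ Finset.univ) =>
        (Finset.sum_comm : ∑ σ', ∑ τ', p σ * p σ' * Q σ σ' τ τ'
          = ∑ τ', ∑ σ', p σ * p σ' * Q σ σ' τ τ')]
      rw [Finset.sum_comm]
    rw [swap]
    rw [Finset.sum_congr rfl fun τ' (_ : τ' ∈ Finset.univ) => hinv τ τ']
    rw [← Finset.mul_sum, hp1, mul_one]
end

section
/- If a kernel Q on a finite set Ω (normalized, symmetric, positive diagonal) satisfies the detailed balance condition μ(σ)μ(σ')Q(σ,σ';τ,τ') = μ(τ)μ(τ')Q(τ,τ';σ,σ') for some full-support probability measure μ, then any fixed point p of the dynamics p ↦ p∘p also satisfies detailed balance: p(σ)p(σ')Q(σ,σ';τ,τ') = p(τ)p(τ')Q(τ,τ';σ,σ') for all σ,σ',τ,τ'. -/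
set_option maxHeartbeats 1600000


/-- if the kernel is detailed balanced w.r.t. a full-support
probability measure μ, then any fixed point p of the quadratic dynamics
also satisfies detailed balance. -/
theorem fixed_point_detailed_balance {Ω : Type*} [Fintype Ω]
    (Q : Ω → Ω → Ω → Ω → ℝ) (μ p : Ω → ℝ)
    (hQ0 : ∀ σ σ' τ τ', 0 ≤ Q σ σ' τ τ')
    (hQ1 : ∀ σ σ', ∑ τ, ∑ τ', Q σ σ' τ τ' = 1)
    (hsym1 : ∀ σ σ' τ τ', Q σ σ' τ τ' = Q σ σ' τ' τ)
    (hsym2 : ∀ σ σ' τ τ', Q σ σ' τ τ' = Q σ' σ τ τ')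
    (hdiag : ∀ σ σ', 0 < Q σ σ' σ σ')
    (hμ0 : ∀ σ, 0 < μ σ) (hμ1 : ∑ σ, μ σ = 1)
    (hdb : ∀ σ σ' τ τ', μ σ * μ σ' * Q σ σ' τ τ' = μ τ * μ τ' * Q τ τ' σ σ')
    (hp0 : ∀ σ, 0 ≤ p σ) (hp1 : ∑ σ, p σ = 1)
    (hfix : (fun τ => ∑ σ, ∑ σ', ∑ τ', p σ * p σ' * Q σ σ' τ τ') = p) :
    ∀ σ σ' τ τ', p σ * p σ' * Q σ σ' τ τ' = p τ * p τ' * Q τ τ' σ σ' := by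
  have hfix' : ∀ τ, ∑ σ, ∑ σ', ∑ τ', p σ * p σ' * Q σ σ' τ τ' = p τ :=
    fun τ => congrFun hfix τ
  -- forward closedness of the support
  have hfwd : ∀ a b c d, 0 < p a → 0 < p b → 0 < Q a b c d → 0 < p c := by
    intro a b c d ha hb hq
    have key : p a * p b * Q a b c d ≤ p c := by
      rw [← hfix' c]
      have h1 : p a * p b * Q a b c d ≤ ∑ d', p a * p b * Q a b c d' :=
        Finset.single_le_sum (f := fun d' => p a * p b * Q a b c d')
          (fun i _ => by have := hp0 a; have := hp0 b; have := hQ0 a b c i; positivity)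
          (Finset.mem_univ d)
      have h2 : ∑ d', p a * p b * Q a b c d' ≤ ∑ b', ∑ d', p a * p b' * Q a b' c d' :=
        Finset.single_le_sum (f := fun b' => ∑ d', p a * p b' * Q a b' c d')
          (fun i _ => Finset.sum_nonneg fun j _ => by
            have := hp0 a; have := hp0 i; have := hQ0 a i c j; positivity)
          (Finset.mem_univ b)
      have h3 : ∑ b', ∑ d', p a * p b' * Q a b' c d'
          ≤ ∑ a', ∑ b', ∑ d', p a' * p b' * Q a' b' c d' :=
        Finset.single_le_sum (f := fun a' => ∑ b', ∑ d', p a' * p b' * Q a' b' c d')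
          (fun i _ => Finset.sum_nonneg fun j _ => Finset.sum_nonneg fun k _ => by
            have := hp0 i; have := hp0 j; have := hQ0 i j c k; positivity)
          (Finset.mem_univ a)
      linarith
    have : 0 < p a * p b * Q a b c d := by positivity
    linarith
  -- the log-density, extended by 0 off the support
  set g : Ω → ℝ := fun x => if 0 < p x then Real.log (p x / μ x) else 0 with hgdef
  -- positivity transfer
  have hposall : ∀ a b c d, 0 < p a * p b * Q a b c d →
      0 < p a ∧ 0 < p b ∧ 0 < p c ∧ 0 < p d ∧ 0 < Q a b c d ∧ 0 < Q c d a b := by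
    intro a b c d h
    have hQab : 0 < Q a b c d := by
      rcases lt_or_eq_of_le (hQ0 a b c d) with h' | h'
      · exact h'
      · exfalso; rw [← h'] at h; simp at h
    have hpa : 0 < p a := by
      rcases lt_or_eq_of_le (hp0 a) with h' | h'
      · exact h'
      · exfalso; rw [← h'] at h; simp at h
    have hpb : 0 < p b := by
      rcases lt_or_eq_of_le (hp0 b) with h' | h'
      · exact h'
      · exfalso; rw [← h'] at h; simp at h
    have hpc : 0 < p c := hfwd a b c d hpa hpb hQab
    have hpd : 0 < p d := hfwd a b d c hpa hpb (by rw [← hsym1]; exact hQab)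
    have hQcd : 0 < Q c d a b := by
      have hdb' := hdb a b c d
      have h1 : 0 < μ a * μ b * Q a b c d := by
        have := hμ0 a; have := hμ0 b; positivity
      rw [hdb'] at h1
      by_contra hq; push_neg at hq
      nlinarith [mul_pos (hμ0 c) (hμ0 d)]
    exact ⟨hpa, hpb, hpc, hpd, hQab, hQcd⟩
  -- reindexing lemma
  have swap4 : ∀ h : Ω → Ω → Ω → Ω → ℝ,
      (∑ a, ∑ b, ∑ c, ∑ d, h a b c d) = ∑ a, ∑ b, ∑ c, ∑ d, h c d a b := by
    intro h
    have e : (∑ x : (Ω×Ω)×(Ω×Ω), h x.1.1 x.1.2 x.2.1 x.2.2)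
        = ∑ x : (Ω×Ω)×(Ω×Ω), h x.2.1 x.2.2 x.1.1 x.1.2 :=
      Fintype.sum_equiv (Equiv.prodComm _ _) _ _ (fun x => rfl)
    simpa only [Fintype.sum_prod_type] using e
  -- the H-theorem identity: ∑ p a p b Q a b c d * (g c + g d - g a - g b) = 0
  have hT : (∑ a, ∑ b, ∑ c, ∑ d,
      p a * p b * Q a b c d * (g c + g d - g a - g b)) = 0 := by
    have S1 : (∑ a, ∑ b, ∑ c, ∑ d, p a * p b * Q a b c d * g c) = ∑ c, p c * g c := by
      have step : ∀ c : Ω, (∑ a, ∑ b, ∑ d, p a * p b * Q a b c d * g c) = p c * g c := by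
        intro c
        have : (∑ a, ∑ b, ∑ d, p a * p b * Q a b c d * g c)
            = (∑ a, ∑ b, ∑ d, p a * p b * Q a b c d) * g c := by
          simp only [Finset.sum_mul]
        rw [this, hfix' c]
      calc (∑ a, ∑ b, ∑ c, ∑ d, p a * p b * Q a b c d * g c)
          = ∑ a, ∑ c, ∑ b, ∑ d, p a * p b * Q a b c d * g c :=
            Finset.sum_congr rfl fun a _ => Finset.sum_comm
        _ = ∑ c, ∑ a, ∑ b, ∑ d, p a * p b * Q a b c d * g c := Finset.sum_comm
        _ = ∑ c, p c * g c := Finset.sum_congr rfl fun c _ => step c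
    have S2 : (∑ a, ∑ b, ∑ c, ∑ d, p a * p b * Q a b c d * g d) = ∑ c, p c * g c := by
      have e : (∑ a, ∑ b, ∑ c, ∑ d, p a * p b * Q a b c d * g d)
          = ∑ a, ∑ b, ∑ c, ∑ d, p a * p b * Q a b c d * g c := by
        apply Finset.sum_congr rfl; intro a _
        apply Finset.sum_congr rfl; intro b _
        calc (∑ c, ∑ d, p a * p b * Q a b c d * g d)
            = ∑ c, ∑ d, p a * p b * Q a b d c * g c := Finset.sum_comm
          _ = ∑ c, ∑ d, p a * p b * Q a b c d * g c := by
              apply Finset.sum_congr rfl; intro c _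
              apply Finset.sum_congr rfl; intro d _
              rw [← hsym1]
      rw [e, S1]
    have S3 : (∑ a, ∑ b, ∑ c, ∑ d, p a * p b * Q a b c d * g a) = ∑ a, p a * g a := by
      have step : ∀ a b : Ω, (∑ c, ∑ d, p a * p b * Q a b c d * g a) = p a * p b * g a := by
        intro a b
        have : (∑ c, ∑ d, p a * p b * Q a b c d * g a)
            = (p a * p b * g a) * ∑ c, ∑ d, Q a b c d := by
          simp only [Finset.mul_sum]
          exact Finset.sum_congr rfl fun c _ => Finset.sum_congr rfl fun d _ => by ring
        rw [this, hQ1, mul_one]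
      calc (∑ a, ∑ b, ∑ c, ∑ d, p a * p b * Q a b c d * g a)
          = ∑ a, ∑ b, p a * p b * g a :=
            Finset.sum_congr rfl fun a _ => Finset.sum_congr rfl fun b _ => step a b
        _ = ∑ a, (p a * g a) * ∑ b, p b := by
            apply Finset.sum_congr rfl; intro a _
            rw [Finset.mul_sum]; exact Finset.sum_congr rfl fun b _ => by ring
        _ = ∑ a, p a * g a := by
            apply Finset.sum_congr rfl; intro a _; rw [hp1, mul_one]
    have S4 : (∑ a, ∑ b, ∑ c, ∑ d, p a * p b * Q a b c d * g b) = ∑ a, p a * g a := by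
      have e : (∑ a, ∑ b, ∑ c, ∑ d, p a * p b * Q a b c d * g b)
          = ∑ a, ∑ b, ∑ c, ∑ d, p a * p b * Q a b c d * g a := by
        calc (∑ a, ∑ b, ∑ c, ∑ d, p a * p b * Q a b c d * g b)
            = ∑ a, ∑ b, ∑ c, ∑ d, p b * p a * Q b a c d * g a := Finset.sum_comm
          _ = ∑ a, ∑ b, ∑ c, ∑ d, p a * p b * Q a b c d * g a := by
              apply Finset.sum_congr rfl; intro a _
              apply Finset.sum_congr rfl; intro b _
              apply Finset.sum_congr rfl; intro c _
              apply Finset.sum_congr rfl; intro d _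
              rw [hsym2 b a c d]; ring
      rw [e, S3]
    have expand : (∑ a, ∑ b, ∑ c, ∑ d,
        p a * p b * Q a b c d * (g c + g d - g a - g b))
        = (∑ a, ∑ b, ∑ c, ∑ d, p a * p b * Q a b c d * g c)
          + (∑ a, ∑ b, ∑ c, ∑ d, p a * p b * Q a b c d * g d)
          - (∑ a, ∑ b, ∑ c, ∑ d, p a * p b * Q a b c d * g a)
          - (∑ a, ∑ b, ∑ c, ∑ d, p a * p b * Q a b c d * g b) := by
      simp only [mul_add, mul_sub, Finset.sum_add_distrib, Finset.sum_sub_distrib]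
    rw [expand, S1, S2, S3, S4]; ring
  -- the antisymmetrized sum U = 0
  have hU : (∑ a, ∑ b, ∑ c, ∑ d,
      (p a * p b * Q a b c d - p c * p d * Q c d a b) * (g c + g d - g a - g b)) = 0 := by
    have hT2 : (∑ a, ∑ b, ∑ c, ∑ d,
        p c * p d * Q c d a b * (g c + g d - g a - g b)) = 0 := by
      have hs := swap4 (fun a b c d => p a * p b * Q a b c d * (g a + g b - g c - g d))
      rw [← hs]
      have hsum : (∑ a, ∑ b, ∑ c, ∑ d, p a * p b * Q a b c d * (g a + g b - g c - g d))
          + (∑ a, ∑ b, ∑ c, ∑ d, p a * p b * Q a b c d * (g c + g d - g a - g b)) = 0 := by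
        rw [← Finset.sum_add_distrib]
        apply Finset.sum_eq_zero; intro a _
        rw [← Finset.sum_add_distrib]
        apply Finset.sum_eq_zero; intro b _
        rw [← Finset.sum_add_distrib]
        apply Finset.sum_eq_zero; intro c _
        rw [← Finset.sum_add_distrib]
        apply Finset.sum_eq_zero; intro d _
        ring
      linarith
    have split : (∑ a, ∑ b, ∑ c, ∑ d,
        (p a * p b * Q a b c d - p c * p d * Q c d a b) * (g c + g d - g a - g b))
        = (∑ a, ∑ b, ∑ c, ∑ d, p a * p b * Q a b c d * (g c + g d - g a - g b))
          - (∑ a, ∑ b, ∑ c, ∑ d, p c * p d * Q c d a b * (g c + g d - g a - g b)) := by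
      simp only [sub_mul, Finset.sum_sub_distrib]
    rw [split, hT, hT2, sub_zero]
  -- termwise nonpositivity
  have hterm : ∀ a b c d : Ω,
      (p a * p b * Q a b c d - p c * p d * Q c d a b) * (g c + g d - g a - g b) ≤ 0 := by
    intro a b c d
    by_cases hApos : 0 < p a * p b * Q a b c d
    case neg =>
      by_cases hBpos : 0 < p c * p d * Q c d a b
      case neg =>
        have hA0 : 0 ≤ p a * p b * Q a b c d := by
          have := hp0 a; have := hp0 b; have := hQ0 a b c d; positivity
        have hB0 : 0 ≤ p c * p d * Q c d a b := by
          have := hp0 c; have := hp0 d; have := hQ0 c d a b; positivity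
        have e1 : p a * p b * Q a b c d = 0 := le_antisymm (not_lt.mp hApos) hA0
        have e2 : p c * p d * Q c d a b = 0 := le_antisymm (not_lt.mp hBpos) hB0
        rw [e1, e2]; simp
      case pos =>
        obtain ⟨hpc, hpd, hpa, hpb, hQcd, hQab⟩ := hposall c d a b hBpos
        exact absurd (by positivity : (0:ℝ) < p a * p b * Q a b c d) hApos
    case pos =>
      obtain ⟨hpa, hpb, hpc, hpd, hQab, hQcd⟩ := hposall a b c d hApos
      have hga : g a = Real.log (p a / μ a) := if_pos hpa
      have hgb : g b = Real.log (p b / μ b) := if_pos hpb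
      have hgc : g c = Real.log (p c / μ c) := if_pos hpc
      have hgd : g d = Real.log (p d / μ d) := if_pos hpd
      have hμa := hμ0 a; have hμb := hμ0 b; have hμc := hμ0 c; have hμd := hμ0 d
      set x := (p a / μ a) * (p b / μ b) with hx
      set y := (p c / μ c) * (p d / μ d) with hy
      have hxpos : 0 < x := by rw [hx]; positivity
      have hypos : 0 < y := by rw [hy]; positivity
      have hgsum : g c + g d - g a - g b = Real.log y - Real.log x := by
        rw [hga, hgb, hgc, hgd, hx, hy,
          Real.log_mul (by positivity) (by positivity),
          Real.log_mul (by positivity) (by positivity)]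
        ring
      set W := μ a * μ b * Q a b c d with hW
      have hWpos : 0 < W := by rw [hW]; positivity
      have hAx : p a * p b * Q a b c d = x * W := by
        rw [hx, hW]; field_simp
      have hBy : p c * p d * Q c d a b = y * W := by
        rw [hy, hW, hdb a b c d]; field_simp
      rw [hgsum, hAx, hBy]
      rcases le_total x y with hxy | hxy
      · have h1 : x * W - y * W ≤ 0 := by nlinarith
        have h2 : 0 ≤ Real.log y - Real.log x := by
          have := Real.log_le_log hxpos hxy; linarith
        exact mul_nonpos_of_nonpos_of_nonneg h1 h2
      · have h1 : 0 ≤ x * W - y * W := by nlinarith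
        have h2 : Real.log y - Real.log x ≤ 0 := by
          have := Real.log_le_log hypos hxy; linarith
        exact mul_nonpos_of_nonneg_of_nonpos h1 h2
  -- each term is zero
  have hzero : ∀ a b c d : Ω,
      (p a * p b * Q a b c d - p c * p d * Q c d a b) * (g c + g d - g a - g b) = 0 := by
    have hU' : (∑ x : (Ω×Ω)×(Ω×Ω),
        (p x.1.1 * p x.1.2 * Q x.1.1 x.1.2 x.2.1 x.2.2
          - p x.2.1 * p x.2.2 * Q x.2.1 x.2.2 x.1.1 x.1.2)
          * (g x.2.1 + g x.2.2 - g x.1.1 - g x.1.2)) = 0 := by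
      simpa only [Fintype.sum_prod_type] using hU
    intro a b c d
    exact (Finset.sum_eq_zero_iff_of_nonpos
      (fun x _ => hterm x.1.1 x.1.2 x.2.1 x.2.2)).mp hU' ((a,b),(c,d)) (Finset.mem_univ _)
  -- conclude
  intro a b c d
  by_contra hne
  have hz := hzero a b c d
  have hΔ : g c + g d - g a - g b = 0 := by
    rcases mul_eq_zero.mp hz with h | h
    · exact absurd (sub_eq_zero.mp h) hne
    · exact h
  have hA0 : 0 ≤ p a * p b * Q a b c d := by
    have := hp0 a; have := hp0 b; have := hQ0 a b c d; positivity
  have hB0 : 0 ≤ p c * p d * Q c d a b := by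
    have := hp0 c; have := hp0 d; have := hQ0 c d a b; positivity
  have hone : 0 < p a * p b * Q a b c d ∨ 0 < p c * p d * Q c d a b := by
    by_contra hcon
    push_neg at hcon
    obtain ⟨h1, h2⟩ := hcon
    exact hne (by linarith [le_antisymm h1 hA0, le_antisymm h2 hB0])
  have hall : 0 < p a ∧ 0 < p b ∧ 0 < p c ∧ 0 < p d ∧ 0 < Q a b c d ∧ 0 < Q c d a b := by
    rcases hone with h | h
    · exact hposall a b c d h
    · obtain ⟨h1, h2, h3, h4, h5, h6⟩ := hposall c d a b h
      exact ⟨h3, h4, h1, h2, h6, h5⟩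
  obtain ⟨hpa, hpb, hpc, hpd, hQab, hQcd⟩ := hall
  have hga : g a = Real.log (p a / μ a) := if_pos hpa
  have hgb : g b = Real.log (p b / μ b) := if_pos hpb
  have hgc : g c = Real.log (p c / μ c) := if_pos hpc
  have hgd : g d = Real.log (p d / μ d) := if_pos hpd
  have hμa := hμ0 a; have hμb := hμ0 b; have hμc := hμ0 c; have hμd := hμ0 d
  have hlogeq : Real.log ((p c / μ c) * (p d / μ d))
      = Real.log ((p a / μ a) * (p b / μ b)) := by
    rw [Real.log_mul (by positivity) (by positivity),
      Real.log_mul (by positivity) (by positivity)]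
    rw [hga, hgb, hgc, hgd] at hΔ
    linarith
  have hxy : (p c / μ c) * (p d / μ d) = (p a / μ a) * (p b / μ b) := by
    have h1 : (0:ℝ) < (p c / μ c) * (p d / μ d) := by positivity
    have h2 : (0:ℝ) < (p a / μ a) * (p b / μ b) := by positivity
    have he := Real.exp_log h1
    rw [hlogeq, Real.exp_log h2] at he
    linarith
  apply hne
  have hdbabcd := hdb a b c d
  have key : p a * p b * Q a b c d
      = ((p a / μ a) * (p b / μ b)) * (μ a * μ b * Q a b c d) := by
    field_simp
  have key2 : p c * p d * Q c d a b
      = ((p c / μ c) * (p d / μ d)) * (μ c * μ d * Q c d a b) := by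
    field_simp
  rw [key, key2, ← hdbabcd, hxy]
end

section
/- For the Ising model with interaction matrix J and zero external fields on vertex set V = {1,…,n}, and for any fixed configurations σ, σ' ∈ {−1,+1}^V, the probability distribution γ(Λ | σ,σ') ∝ μ(σ_Λ σ'_{Λᶜ}) μ(σ'_Λ σ_{Λᶜ}) over subsets Λ ⊆ V, when identified with a distribution over spin configurations η ∈ {−1,+1}^V via η_x = +1 ⟺ x ∈ Λ, equals the Ising Gibbs measure with zero fields and interaction matrix J̃ given by J̃_{xy} = 2 J_{xy} σ_x σ_y 1[σ_x ≠ σ'_x] 1[σ_y ≠ σ'_y]; that is, γ(η|σ,σ') ∝ exp{(1/2) ∑_{x,y} J̃_{xy} η_x η_y}. -/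
/-- The ±1 spin value of a Boolean. -/
def spin (b : Bool) : ℝ := if b then 1 else -1

/-- Unnormalized Ising weight with interaction J and external fields h. -/
noncomputable def isingWeight {n : ℕ} (J : Fin n → Fin n → ℝ) (h : Fin n → ℝ)
    (σ : Fin n → Bool) : ℝ :=
  Real.exp ((1 / 2) * ∑ x, ∑ y, J x y * spin (σ x) * spin (σ y)
      + ∑ x, h x * spin (σ x))

/-- Ising Gibbs measure with interaction J and external fields h. -/
noncomputable def isingGibbs {n : ℕ} (J : Fin n → Fin n → ℝ) (h : Fin n → ℝ)
    (σ : Fin n → Bool) : ℝ :=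
  isingWeight J h σ / ∑ τ, isingWeight J h τ

/-- The configuration equal to σ on Λ and to σ' off Λ. -/
def mix {n : ℕ} (Λ : Finset (Fin n)) (σ σ' : Fin n → Bool) : Fin n → Bool :=
  fun x => if x ∈ Λ then σ x else σ'  x

/-!
Write `m = (σ + σ')/2` and `d = (σ - σ')/2` as spin vectors, so that `d_x = σ_x 1[σ_x ≠ σ'_x]`.
With `η` the ±1 indicator of `Λ`, the two mixed configurations are `m + η d` and `m - η d`.
By the parallelogram law for the quadratic form `Q` of `J`, the sum of their energies is
`2 Q(m) + 2 Q(η d)`; the first term does not depend on `Λ` and the second is `J̃[η]`.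
Since the normalising constants of both Gibbs factors are the same `Z`, the product of the
two Gibbs probabilities is `exp(Q(m)) / Z² · exp(J̃[η] / 2)`.
-/

open Finset

section QuadraticForm

variable {ι : Type*} [Fintype ι]

def quadForm (K : ι → ι → ℝ) (v : ι → ℝ) : ℝ :=
  ∑ x, ∑ y, K x y * v x * v y

lemma quadForm_add_add_quadForm_sub (K : ι → ι → ℝ) (m e : ι → ℝ) :
    quadForm K (m + e) + quadForm K (m - e) = 2 * quadForm K m + 2 * quadForm K e := by
  simp only [quadForm, mul_sum, ← sum_add_distrib]
  refine sum_congr rfl fun x _ => sum_congr rfl fun y _ => ?_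
  simp only [Pi.add_apply, Pi.sub_apply]
  ring

lemma quadForm_mul (K : ι → ι → ℝ) (d η : ι → ℝ) :
    quadForm K (fun x => η x * d x) = quadForm (fun x y => K x y * d x * d y) η := by
  simp only [quadForm]
  refine sum_congr rfl fun x _ => sum_congr rfl fun y _ => ?_
  ring

end QuadraticForm

lemma isingWeight_zero_field {n : ℕ} (J : Fin n → Fin n → ℝ) (τ : Fin n → Bool) :
    isingWeight J (fun _ => 0) τ = Real.exp ((1 / 2) * quadForm J (fun x => spin (τ x))) := by
  simp [isingWeight, quadForm]

lemma sub_spin_div_two (a a' : Bool) :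
    (spin a - spin a') / 2 = spin a * if a ≠ a' then 1 else 0 := by
  cases a <;> cases a' <;> norm_num [spin]

lemma spin_ite (p : Prop) [Decidable p] (a a' : Bool) :
    spin (if p then a else a')
      = (spin a + spin a') / 2 + (if p then 1 else -1) * ((spin a - spin a') / 2) := by
  split_ifs <;> ring

section Mix

variable {n : ℕ} (Λ : Finset (Fin n)) (σ σ' : Fin n → Bool)

def indicatorSpin (x : Fin n) : ℝ := if x ∈ Λ then 1 else -1

lemma spin_mix :
    (fun x => spin (mix Λ σ σ' x))
      = (fun x => (spin (σ x) + spin (σ' x)) / 2)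
        + fun x => indicatorSpin Λ x * ((spin (σ x) - spin (σ' x)) / 2) := by
  funext x
  exact spin_ite _ _ _

lemma spin_mix_swap :
    (fun x => spin (mix Λ σ' σ x))
      = (fun x => (spin (σ x) + spin (σ' x)) / 2)
        - fun x => indicatorSpin Λ x * ((spin (σ x) - spin (σ' x)) / 2) := by
  funext x
  simp only [Pi.sub_apply, mix, spin_ite, indicatorSpin]
  split_ifs <;> ring

end Mix

/-- The interaction `J̃` of the statement. -/
def flipInteraction {n : ℕ} (J : Fin n → Fin n → ℝ) (σ σ' : Fin n → Bool) (x y : Fin n) : ℝ :=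
  2 * J x y * spin (σ x) * spin (σ y)
    * (if σ x ≠ σ' x then 1 else 0) * (if σ y ≠ σ' y then 1 else 0)

lemma quadForm_spin_mix_add_quadForm_spin_mix_swap {n : ℕ} (J : Fin n → Fin n → ℝ)
    (Λ : Finset (Fin n)) (σ σ' : Fin n → Bool) :
    quadForm J (fun x => spin (mix Λ σ σ' x)) + quadForm J (fun x => spin (mix Λ σ' σ x))
      = 2 * quadForm J (fun x => (spin (σ x) + spin (σ' x)) / 2)
        + quadForm (flipInteraction J σ σ') (indicatorSpin Λ) := by
  rw [spin_mix, spin_mix_swap, quadForm_add_add_quadForm_sub, quadForm_mul]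
  congr 1
  simp only [quadForm, flipInteraction, sub_spin_div_two, mul_sum]
  refine sum_congr rfl fun x _ => sum_congr rfl fun y _ => ?_
  ring

theorem gamma_is_ising_general {n : ℕ} (J : Fin n → Fin n → ℝ)
    (σ σ' : Fin n → Bool) :
    ∃ c : ℝ, 0 < c ∧ ∀ Λ : Finset (Fin n),
      isingGibbs J (fun _ => 0) (mix Λ σ σ') * isingGibbs J (fun _ => 0) (mix Λ σ' σ)
        = c * Real.exp ((1 / 2) * ∑ x, ∑ y,
            (2 * J x y * spin (σ x) * spin (σ y)
              * (if σ x ≠ σ' x then (1 : ℝ) else 0)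
              * (if σ y ≠ σ' y then (1 : ℝ) else 0))
            * (if x ∈ Λ then (1 : ℝ) else -1) * (if y ∈ Λ then (1 : ℝ) else -1)) := by
  set Z := ∑ τ, isingWeight J (fun _ => 0) τ
  have hZ : 0 < Z := sum_pos (fun τ _ => Real.exp_pos _) univ_nonempty
  refine ⟨Real.exp (quadForm J fun x => (spin (σ x) + spin (σ' x)) / 2) / (Z * Z),
    by positivity, fun Λ => ?_⟩
  change _ = _ * Real.exp ((1 / 2) * quadForm (flipInteraction J σ σ') (indicatorSpin Λ))
  rw [isingGibbs, isingGibbs, div_mul_div_comm, isingWeight_zero_field, isingWeight_zero_field,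
    ← Real.exp_add, ← mul_add, quadForm_spin_mix_add_quadForm_spin_mix_swap, mul_add,
    ← mul_assoc, one_div_mul_cancel two_ne_zero, one_mul, Real.exp_add]
  ring

/-- the distribution γ(Λ|σ,σ') ∝ μ(σ_Λσ'_{Λᶜ})μ(σ'_Λσ_{Λᶜ}),
viewed as a distribution over η ∈ {±1}^V via η_x = +1 ⟺ x ∈ Λ, is the
zero-field Ising Gibbs measure with interactions
J̃_{xy} = 2 J_{xy} σ_x σ_y 1[σ_x ≠ σ'_x] 1[σ_y ≠ σ'_y]. -/
theorem gamma_is_ising {n : ℕ} (J : Fin n → Fin n → ℝ)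
    (hJsym : ∀ x y, J x y = J y x) (σ σ' : Fin n → Bool) :
    ∃ c : ℝ, 0 < c ∧ ∀ Λ : Finset (Fin n),
      isingGibbs J (fun _ => 0) (mix Λ σ σ') * isingGibbs J (fun _ => 0) (mix Λ σ' σ)
        = c * Real.exp ((1 / 2) * ∑ x, ∑ y,
            (2 * J x y * spin (σ x) * spin (σ y)
              * (if σ x ≠ σ' x then (1 : ℝ) else 0)
              * (if σ y ≠ σ' y then (1 : ℝ) else 0))
            * (if x ∈ Λ then (1 : ℝ) else -1) * (if y ∈ Λ then (1 : ℝ) else -1)) :=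
  gamma_is_ising_general J σ σ'
end

section
/- The nonlinear block dynamics interaction for the Ising model conserves single-site marginals in the averaged sense: if p, q are probability measures on Ω = {−1,+1}^V and p∘q denotes the symmetrized block interaction, then for every vertex x and every spin value a, (p∘q)(σ_x = a) = (p(σ_x = a) + q(σ_x = a))/2. In particular (p∘p)(σ_x = a) = p(σ_x = a). -/
/-- The nonlinear block dynamics kernel Q_J, defined from the zero-field Gibbs
measure: (τ,τ') = (σ'_Λσ_{Λᶜ}, σ_Λσ'_{Λᶜ}) with Λ chosen with probability
proportional to μ_J(σ'_Λσ_{Λᶜ})μ_J(σ_Λσ'_{Λᶜ}). -/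
noncomputable def blockKernel {n : ℕ} (J : Fin n → Fin n → ℝ)
    (σ σ' τ τ' : Fin n → Bool) : ℝ :=
  (∑ Λ : Finset (Fin n),
      isingGibbs J (fun _ => 0) (mix Λ σ' σ) * isingGibbs J (fun _ => 0) (mix Λ σ σ')
        * (if τ = mix Λ σ' σ then 1 else 0) * (if τ' = mix Λ σ σ' then 1 else 0))
    / (∑ A : Finset (Fin n),
        isingGibbs J (fun _ => 0) (mix A σ' σ) * isingGibbs J (fun _ => 0) (mix A σ σ'))

lemma isingGibbs_pos {n : ℕ} (J : Fin n → Fin n → ℝ) (h : Fin n → ℝ)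
    (σ : Fin n → Bool) : 0 < isingGibbs J h σ := by
  unfold isingGibbs
  exact div_pos (Real.exp_pos _)
    (Finset.sum_pos (fun τ _ => Real.exp_pos _) Finset.univ_nonempty)

lemma mix_compl {n : ℕ} (Λ : Finset (Fin n)) (a b : Fin n → Bool) :
    mix Λᶜ a b = mix Λ b a := by
  funext y
  by_cases hy : y ∈ Λ <;> simp [mix, hy]

lemma swap3 {α β γ M : Type*} [Fintype α] [Fintype β] [Fintype γ] [AddCommMonoid M]
    (F : α → β → γ → M) :
    ∑ a, ∑ b, ∑ c, F a b c = ∑ c, ∑ a, ∑ b, F a b c := by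
  calc ∑ a, ∑ b, ∑ c, F a b c
      = ∑ a, ∑ c, ∑ b, F a b c := Finset.sum_congr rfl (fun a _ => Finset.sum_comm)
    _ = ∑ c, ∑ a, ∑ b, F a b c := Finset.sum_comm

lemma collapse_aux {n : ℕ} (c : Finset (Fin n) → ℝ) (A B : Finset (Fin n) → (Fin n → Bool))
    (g : (Fin n → Bool) → ℝ) :
    ∑ τ : Fin n → Bool, ∑ τ' : Fin n → Bool, (∑ Λ : Finset (Fin n),
        c Λ * (if τ = A Λ then (1:ℝ) else 0) * (if τ' = B Λ then 1 else 0)) * g τ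
      = ∑ Λ : Finset (Fin n), c Λ * g (A Λ) := by
  simp only [Finset.sum_mul]
  rw [swap3]
  congr 1; funext Λ
  simp [mul_ite, ite_mul, mul_one, mul_zero, zero_mul, Finset.sum_ite_eq', mul_comm]

lemma kernel_marginal {n : ℕ} (J : Fin n → Fin n → ℝ) (x : Fin n) (a : Bool)
    (σ σ' : Fin n → Bool) :
    ∑ τ, ∑ τ', blockKernel J σ σ' τ τ' * (if τ x = a then 1 else 0)
      = ((if σ x = a then (1:ℝ) else 0) + (if σ' x = a then 1 else 0)) / 2 := by
  set μ := isingGibbs J (fun _ => 0) with hμ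
  set Z := ∑ A : Finset (Fin n), μ (mix A σ' σ) * μ (mix A σ σ') with hZ
  have hZpos : 0 < Z :=
    Finset.sum_pos (fun A _ => mul_pos (isingGibbs_pos _ _ _) (isingGibbs_pos _ _ _))
      Finset.univ_nonempty
  have hcollapse :
      ∑ τ, ∑ τ', blockKernel J σ σ' τ τ' * (if τ x = a then 1 else 0)
        = (∑ Λ : Finset (Fin n),
            μ (mix Λ σ' σ) * μ (mix Λ σ σ') * (if (mix Λ σ' σ) x = a then 1 else 0)) / Z := by
    unfold blockKernel
    rw [← hμ, ← hZ]
    simp only [div_mul_eq_mul_div, ← Finset.sum_div]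
    congr 1
    exact collapse_aux (fun Λ => μ (mix Λ σ' σ) * μ (mix Λ σ σ'))
      (fun Λ => mix Λ σ' σ) (fun Λ => mix Λ σ σ') (fun τ => if τ x = a then 1 else 0)
  rw [hcollapse]
  -- symmetry: sum with A-indicator equals sum with B-indicator
  have hsym : (∑ Λ : Finset (Fin n),
        μ (mix Λ σ' σ) * μ (mix Λ σ σ') * (if (mix Λ σ' σ) x = a then 1 else 0))
      = ∑ Λ : Finset (Fin n),
        μ (mix Λ σ' σ) * μ (mix Λ σ σ') * (if (mix Λ σ σ') x = a then 1 else 0) := by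
    apply Fintype.sum_equiv (Function.Involutive.toPerm _ (show Function.Involutive (compl : Finset (Fin n) → Finset (Fin n)) from fun Λ : Finset (Fin n) => compl_compl Λ))
    intro Λ
    simp only [Function.Involutive.coe_toPerm, mix_compl]
    ring
  have hkey : (∑ Λ : Finset (Fin n),
        μ (mix Λ σ' σ) * μ (mix Λ σ σ') * (if (mix Λ σ' σ) x = a then 1 else 0))
      = Z * (((if σ x = a then (1:ℝ) else 0) + (if σ' x = a then 1 else 0)) / 2) := by
    have h2 : (∑ Λ : Finset (Fin n),
        μ (mix Λ σ' σ) * μ (mix Λ σ σ') * (if (mix Λ σ' σ) x = a then 1 else 0))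
        + (∑ Λ : Finset (Fin n),
        μ (mix Λ σ' σ) * μ (mix Λ σ σ') * (if (mix Λ σ' σ) x = a then 1 else 0))
        = Z * ((if σ x = a then (1:ℝ) else 0) + (if σ' x = a then 1 else 0)) := by
      rw (occs := .pos [2]) [hsym]
      rw [← Finset.sum_add_distrib, hZ, Finset.sum_mul]
      congr 1; funext Λ
      have : (if (mix Λ σ' σ) x = a then (1:ℝ) else 0) + (if (mix Λ σ σ') x = a then 1 else 0)
          = (if σ x = a then (1:ℝ) else 0) + (if σ' x = a then 1 else 0) := by
        by_cases hx : x ∈ Λ <;> simp [mix, hx, add_comm]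
      rw [← mul_add, this]
    linarith
  rw [hkey]
  exact mul_div_cancel_left₀ _ hZpos.ne'

lemma block_marginal_aux {n : ℕ} (J : Fin n → Fin n → ℝ)
    (p q : (Fin n → Bool) → ℝ)
    (hp1 : ∑ σ, p σ = 1) (hq1 : ∑ σ, q σ = 1)
    (x : Fin n) (a : Bool) :
    (1 / 2) * ∑ σ, ∑ σ', (p σ * q σ' + p σ' * q σ) *
        ∑ τ, ∑ τ', blockKernel J σ σ' τ τ' * (if τ x = a then 1 else 0)
      = ((∑ σ, if σ x = a then p σ else 0) + (∑ σ, if σ x = a then q σ else 0)) / 2 := by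
  set c : (Fin n → Bool) → ℝ := fun σ => if σ x = a then 1 else 0 with hc
  set P := ∑ σ, c σ * p σ with hP
  set Q := ∑ σ, c σ * q σ with hQ
  have hPc : (∑ σ, if σ x = a then p σ else 0) = P := by
    rw [hP]; exact Finset.sum_congr rfl (fun σ _ => by rw [hc]; simp [boole_mul])
  have hQc : (∑ σ, if σ x = a then q σ else 0) = Q := by
    rw [hQ]; exact Finset.sum_congr rfl (fun σ _ => by rw [hc]; simp [boole_mul])
  have hker : ∀ σ σ' : Fin n → Bool,
      ∑ τ, ∑ τ', blockKernel J σ σ' τ τ' * (if τ x = a then 1 else 0)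
        = (c σ + c σ') / 2 := fun σ σ' => kernel_marginal J x a σ σ'
  have inner : ∀ σ : Fin n → Bool,
      ∑ σ', (p σ * q σ' + p σ' * q σ) * ((c σ + c σ') / 2)
        = (1/2) * (c σ * p σ + p σ * Q + c σ * q σ + q σ * P) := by
    intro σ
    have hterm : ∀ σ' : Fin n → Bool, (p σ * q σ' + p σ' * q σ) * ((c σ + c σ') / 2)
        = (1/2) * (c σ * p σ * q σ' + p σ * (c σ' * q σ') + c σ * q σ * p σ'
            + q σ * (c σ' * p σ')) := fun σ' => by ring
    simp only [hterm, ← Finset.mul_sum]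
    congr 1
    rw [Finset.sum_add_distrib, Finset.sum_add_distrib, Finset.sum_add_distrib,
        ← Finset.mul_sum, ← Finset.mul_sum, ← Finset.mul_sum, ← Finset.mul_sum,
        hq1, hp1, ← hQ, ← hP]
    ring
  calc (1 / 2) * ∑ σ, ∑ σ', (p σ * q σ' + p σ' * q σ) *
        ∑ τ, ∑ τ', blockKernel J σ σ' τ τ' * (if τ x = a then 1 else 0)
      = (1 / 2) * ∑ σ, ∑ σ', (p σ * q σ' + p σ' * q σ) * ((c σ + c σ') / 2) := by
        congr 1
        exact Finset.sum_congr rfl (fun σ _ => Finset.sum_congr rfl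
          (fun σ' _ => by rw [hker σ σ']))
    _ = (1 / 2) * ∑ σ, (1/2) * (c σ * p σ + p σ * Q + c σ * q σ + q σ * P) := by
        congr 1
        exact Finset.sum_congr rfl (fun σ _ => inner σ)
    _ = (P + Q) / 2 := by
        rw [← Finset.mul_sum, Finset.sum_add_distrib, Finset.sum_add_distrib,
            Finset.sum_add_distrib, ← hP, ← hQ, ← Finset.sum_mul, ← Finset.sum_mul, hp1, hq1]
        ring
    _ = ((∑ σ, if σ x = a then p σ else 0) + (∑ σ, if σ x = a then q σ else 0)) / 2 := by
        rw [hPc, hQc]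

/-- the symmetrized block interaction p∘q conserves single-site
marginals in the averaged sense, and in particular p∘p conserves marginals. -/
theorem block_conserves_marginals {n : ℕ} (J : Fin n → Fin n → ℝ)
    (hJsym : ∀ x y, J x y = J y x)
    (p q : (Fin n → Bool) → ℝ)
    (hp0 : ∀ σ, 0 ≤ p σ) (hp1 : ∑ σ, p σ = 1)
    (hq0 : ∀ σ, 0 ≤ q σ) (hq1 : ∑ σ, q σ = 1)
    (x : Fin n) (a : Bool) :
    ((1 / 2) * ∑ σ, ∑ σ', (p σ * q σ' + p σ' * q σ) *
        ∑ τ, ∑ τ', blockKernel J σ σ' τ τ' * (if τ x = a then 1 else 0)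
      = ((∑ σ, if σ x = a then p σ else 0) + (∑ σ, if σ x = a then q σ else 0)) / 2)
    ∧ ((1 / 2) * ∑ σ, ∑ σ', (p σ * p σ' + p σ' * p σ) *
        ∑ τ, ∑ τ', blockKernel J σ σ' τ τ' * (if τ x = a then 1 else 0)
      = ∑ σ, if σ x = a then p σ else 0) := by
  refine ⟨block_marginal_aux J p q hp1 hq1 x a, ?_⟩
  rw [block_marginal_aux J p p hp1 hp1 x a]
  ring
end

section
/- For the block kernel Q_J of the Ising model, for every vertex x, spin value a, and configurations σ, σ', the symmetrized marginal identity holds: (1/2) ∑_{τ,τ'} (Q_J(σ,σ';τ,τ') + Q_J(σ',σ;τ,τ')) 1[τ_x = a] = (1/2)(1[σ_x = a] + 1[σ'_x = a]). -/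
lemma collapse {n : ℕ} (A : Finset (Fin n) → ℝ)
    (u v : Finset (Fin n) → Fin n → Bool) (g : (Fin n → Bool) → ℝ) :
    ∑ τ : Fin n → Bool, ∑ τ' : Fin n → Bool,
      (∑ Λ : Finset (Fin n),
        A Λ * (if τ = u Λ then 1 else 0) * (if τ' = v Λ then 1 else 0)) * g τ
    = ∑ Λ : Finset (Fin n), A Λ * g (u Λ) := by
  have h1 : ∀ τ : Fin n → Bool, (∑ τ' : Fin n → Bool, (∑ Λ : Finset (Fin n),
      A Λ * (if τ = u Λ then 1 else 0) * (if τ' = v Λ then 1 else 0)) * g τ)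
      = ∑ Λ : Finset (Fin n), A Λ * (if τ = u Λ then 1 else 0) * g τ := by
    intro τ
    simp only [Finset.sum_mul]
    rw [Finset.sum_comm]
    refine Finset.sum_congr rfl fun Λ _ => ?_
    simp only [mul_ite, ite_mul, mul_one, one_mul, mul_zero, zero_mul,
      Finset.sum_ite_eq', Finset.mem_univ, if_true]
  simp only [h1]
  rw [Finset.sum_comm]
  refine Finset.sum_congr rfl fun Λ _ => ?_
  simp only [mul_ite, ite_mul, mul_one, one_mul, mul_zero, zero_mul,
    Finset.sum_ite_eq', Finset.mem_univ, if_true]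

lemma kernel_marginal_s10 {n : ℕ} (J : Fin n → Fin n → ℝ) (σ σ' : Fin n → Bool)
    (g : (Fin n → Bool) → ℝ) :
    ∑ τ : Fin n → Bool, ∑ τ' : Fin n → Bool, blockKernel J σ σ' τ τ' * g τ
    = (∑ Λ : Finset (Fin n),
        isingGibbs J (fun _ => 0) (mix Λ σ' σ) * isingGibbs J (fun _ => 0) (mix Λ σ σ')
          * g (mix Λ σ' σ))
      / (∑ A : Finset (Fin n),
        isingGibbs J (fun _ => 0) (mix A σ' σ) * isingGibbs J (fun _ => 0) (mix A σ σ')) := by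
  simp only [blockKernel, div_mul_eq_mul_div, ← Finset.sum_div]
  rw [collapse (fun Λ => isingGibbs J (fun _ => 0) (mix Λ σ' σ)
      * isingGibbs J (fun _ => 0) (mix Λ σ σ')) (fun Λ => mix Λ σ' σ) (fun Λ => mix Λ σ σ') g]

/-- symmetrized single-site marginal identity for the block kernel. -/
theorem block_kernel_marginal_identity {n : ℕ} (J : Fin n → Fin n → ℝ)
    (hJsym : ∀ x y, J x y = J y x)
    (σ σ' : Fin n → Bool) (x : Fin n) (a : Bool) :
    (1 / 2) * ∑ τ, ∑ τ', (blockKernel J σ σ' τ τ' + blockKernel J σ' σ τ τ')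
        * (if τ x = a then 1 else 0)
      = (1 / 2) * ((if σ x = a then (1 : ℝ) else 0) + (if σ' x = a then (1 : ℝ) else 0)) := by
  set f : (Fin n → Bool) → ℝ := isingGibbs J (fun _ => 0) with hf
  set g : (Fin n → Bool) → ℝ := fun τ => (if τ x = a then (1 : ℝ) else 0) with hg
  set c : ℝ := (if σ x = a then (1 : ℝ) else 0) + (if σ' x = a then (1 : ℝ) else 0) with hc
  have hZ : (0 : ℝ) < ∑ A : Finset (Fin n), f (mix A σ' σ) * f (mix A σ σ') :=
    Finset.sum_pos (fun A _ => mul_pos (isingGibbs_pos _ _ _) (isingGibbs_pos _ _ _))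
      ⟨∅, Finset.mem_univ ∅⟩
  have hZ' : (∑ A : Finset (Fin n), f (mix A σ σ') * f (mix A σ' σ))
      = ∑ A : Finset (Fin n), f (mix A σ' σ) * f (mix A σ σ') :=
    Finset.sum_congr rfl fun A _ => mul_comm _ _
  have key : ∑ τ : Fin n → Bool, ∑ τ' : Fin n → Bool,
      (blockKernel J σ σ' τ τ' + blockKernel J σ' σ τ τ') * g τ = c := by
    simp only [add_mul, Finset.sum_add_distrib]
    rw [kernel_marginal_s10 J σ σ' g, kernel_marginal_s10 J σ' σ g, ← hf, hZ',
      ← add_div, ← Finset.sum_add_distrib]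
    have hterm : ∀ Λ : Finset (Fin n),
        f (mix Λ σ' σ) * f (mix Λ σ σ') * g (mix Λ σ' σ)
          + f (mix Λ σ σ') * f (mix Λ σ' σ) * g (mix Λ σ σ')
        = f (mix Λ σ' σ) * f (mix Λ σ σ') * c := by
      intro Λ
      rw [mul_comm (f (mix Λ σ σ')) (f (mix Λ σ' σ)), ← mul_add]
      congr 1
      by_cases hx : x ∈ Λ <;> simp [mix, hx, hg, hc, add_comm]
    rw [Finset.sum_congr rfl fun Λ _ => hterm Λ, ← Finset.sum_mul]
    exact mul_div_cancel_left₀ c hZ.ne'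
  rw [key]
end

section
/- The block kernel Q_J depends only on J and not on the external fields: for any symmetric J, any fields h, h' ∈ ℝⁿ, any σ, σ', and any two pairs (τ,τ') and (η,η') obtained from (σ,σ') by exchanging spins on subsets Λ and Λ' respectively, one has μ_{J,h}(τ)μ_{J,h}(τ') / (μ_{J,h}(η)μ_{J,h}(η')) = μ_{J,h'}(τ)μ_{J,h'}(τ') / (μ_{J,h'}(η)μ_{J,h'}(η')). -/

lemma isingWeight_pos {n : ℕ} (J : Fin n → Fin n → ℝ) (h : Fin n → ℝ)
    (σ : Fin n → Bool) : 0 < isingWeight J h σ := Real.exp_pos _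

lemma partition_pos {n : ℕ} (J : Fin n → Fin n → ℝ) (h : Fin n → ℝ) :
    0 < ∑ τ : Fin n → Bool, isingWeight J h τ :=
  Finset.sum_pos (fun τ _ => isingWeight_pos J h τ) ⟨fun _ => true, Finset.mem_univ _⟩

lemma weight_pair {n : ℕ} (J : Fin n → Fin n → ℝ) (h : Fin n → ℝ)
    (σ σ' : Fin n → Bool) (Λ : Finset (Fin n)) :
    isingWeight J h (mix Λ σ' σ) * isingWeight J h (mix Λ σ σ')
      = isingWeight J (fun _ => 0) (mix Λ σ' σ) * isingWeight J (fun _ => 0) (mix Λ σ σ')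
        * Real.exp (∑ x, h x * (spin (σ x) + spin (σ' x))) := by
  simp only [isingWeight, ← Real.exp_add]
  congr 1
  have key : ∀ x, spin (mix Λ σ' σ x) + spin (mix Λ σ σ' x) = spin (σ x) + spin (σ' x) := by
    intro x
    simp only [mix]
    by_cases hx : x ∈ Λ <;> simp [hx] <;> ring
  have : ∑ x, h x * spin (mix Λ σ' σ x) + ∑ x, h x * spin (mix Λ σ σ' x)
      = ∑ x, h x * (spin (σ x) + spin (σ' x)) := by
    rw [← Finset.sum_add_distrib]
    exact Finset.sum_congr rfl (fun x _ => by rw [← mul_add, key x])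
  simp only [mul_zero, zero_mul, Finset.sum_const_zero, add_zero]
  linarith

lemma gibbs_pair_ratio {n : ℕ} (J : Fin n → Fin n → ℝ) (h : Fin n → ℝ)
    (σ σ' : Fin n → Bool) (Λ Λ' : Finset (Fin n)) :
    (isingGibbs J h (mix Λ σ' σ) * isingGibbs J h (mix Λ σ σ'))
        / (isingGibbs J h (mix Λ' σ' σ) * isingGibbs J h (mix Λ' σ σ'))
      = (isingWeight J (fun _ => 0) (mix Λ σ' σ) * isingWeight J (fun _ => 0) (mix Λ σ σ'))
        / (isingWeight J (fun _ => 0) (mix Λ' σ' σ) * isingWeight J (fun _ => 0) (mix Λ' σ σ')) := by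
  have hZ := (partition_pos J h).ne'
  have hE := (Real.exp_pos (∑ x, h x * (spin (σ x) + spin (σ' x)))).ne'
  have hb := (mul_pos (isingWeight_pos J (fun _ => 0) (mix Λ' σ' σ))
    (isingWeight_pos J (fun _ => 0) (mix Λ' σ σ'))).ne'
  simp only [isingGibbs, div_mul_div_comm]
  rw [weight_pair J h σ σ' Λ, weight_pair J h σ σ' Λ']
  field_simp

/-- the ratio μ_{J,h}(τ)μ_{J,h}(τ')/(μ_{J,h}(η)μ_{J,h}(η')) for
pairs obtained by exchanging spins on subsets Λ, Λ' does not depend on the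
external fields h. -/
theorem ratio_independent_of_fields {n : ℕ} (J : Fin n → Fin n → ℝ)
    (hJsym : ∀ x y, J x y = J y x) (h h' : Fin n → ℝ)
    (σ σ' : Fin n → Bool) (Λ Λ' : Finset (Fin n)) :
    (isingGibbs J h (mix Λ σ' σ) * isingGibbs J h (mix Λ σ σ'))
        / (isingGibbs J h (mix Λ' σ' σ) * isingGibbs J h (mix Λ' σ σ'))
      = (isingGibbs J h' (mix Λ σ' σ) * isingGibbs J h' (mix Λ σ σ'))
          / (isingGibbs J h' (mix Λ' σ' σ) * isingGibbs J h' (mix Λ' σ σ')) := by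
  rw [gibbs_pair_ratio, gibbs_pair_ratio]
end

section
/- The block kernel Q_J satisfies detailed balance with respect to every Ising Gibbs measure μ_{J,h}: for all σ, σ', τ, τ' ∈ Ω and all h ∈ ℝⁿ, μ_{J,h}(σ)μ_{J,h}(σ')Q_J(σ,σ';τ,τ') = μ_{J,h}(τ)μ_{J,h}(τ')Q_J(τ,τ';σ,σ'). -/
/-!
Exchanging the block `Λ` between `σ` and `σ'` is an involution, and it preserves the sitewise
spin sums `σ x + σ' x`. The exchange therefore leaves the normalising sum over blocks unchanged
(reindex it by symmetric difference with `Λ`), and it leaves the external-field energy of the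
pair unchanged, so `μ_{J,h}(σ)μ_{J,h}(σ')` and `μ_J(σ)μ_J(σ')` differ by the same factor
before and after the exchange. Detailed balance then holds term by term in the sum over `Λ`.
-/

open Finset

section Mix

variable {n : ℕ} (Λ : Finset (Fin n)) (a b : Fin n → Bool)

lemma mix_mix : mix Λ (mix Λ a b) (mix Λ b a) = a := by
  funext x; simp only [mix]; split_ifs <;> rfl

lemma mix_mix_symmDiff (A : Finset (Fin n)) :
    mix A (mix Λ a b) (mix Λ b a) = mix (symmDiff A Λ) b a := by
  funext x
  simp only [mix, mem_symmDiff]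
  by_cases hA : x ∈ A <;> by_cases hΛ : x ∈ Λ <;> simp [hA, hΛ]

lemma eq_mix_and_eq_mix_comm (c d : Fin n → Bool) :
    (c = mix Λ b a ∧ d = mix Λ a b) ↔ (a = mix Λ d c ∧ b = mix Λ c d) := by
  constructor
  · rintro ⟨rfl, rfl⟩
    exact ⟨(mix_mix Λ a b).symm, (mix_mix Λ b a).symm⟩
  · rintro ⟨rfl, rfl⟩
    exact ⟨(mix_mix Λ c d).symm, (mix_mix Λ d c).symm⟩

lemma spin_mix_add_spin_mix (x : Fin n) :
    spin (mix Λ a b x) + spin (mix Λ b a x) = spin (a x) + spin (b x) := by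
  simp only [mix]; split_ifs <;> ring

end Mix

section Gibbs

variable {n : ℕ} (J : Fin n → Fin n → ℝ) (h : Fin n → ℝ)

lemma isingWeight_eq_mul_exp (σ : Fin n → Bool) :
    isingWeight J h σ = isingWeight J (fun _ => 0) σ * Real.exp (∑ x, h x * spin (σ x)) := by
  simp only [isingWeight, ← Real.exp_add, zero_mul, sum_const_zero, add_zero]

lemma isingGibbs_eq_mul_exp (σ : Fin n → Bool) :
    isingGibbs J h σ = isingGibbs J (fun _ => 0) σ * Real.exp (∑ x, h x * spin (σ x))
      * ((∑ τ, isingWeight J (fun _ => 0) τ) / ∑ τ, isingWeight J h τ) := by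
  have hZ : (∑ τ, isingWeight J (fun _ => 0) τ) ≠ 0 :=
    (sum_pos (fun τ _ => Real.exp_pos _) univ_nonempty).ne'
  simp only [isingGibbs]
  rw [isingWeight_eq_mul_exp J h σ]
  field_simp

lemma isingGibbs_mul_swap_of_spin_add_eq (σ σ' τ τ' : Fin n → Bool)
    (hs : ∀ x, spin (τ x) + spin (τ' x) = spin (σ x) + spin (σ' x)) :
    isingGibbs J h σ * isingGibbs J h σ'
        * (isingGibbs J (fun _ => 0) τ * isingGibbs J (fun _ => 0) τ')
      = isingGibbs J h τ * isingGibbs J h τ'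
        * (isingGibbs J (fun _ => 0) σ * isingGibbs J (fun _ => 0) σ') := by
  have hfield : Real.exp (∑ x, h x * spin (σ x)) * Real.exp (∑ x, h x * spin (σ' x))
      = Real.exp (∑ x, h x * spin (τ x)) * Real.exp (∑ x, h x * spin (τ' x)) := by
    simp only [← Real.exp_add, ← sum_add_distrib, ← mul_add, hs]
  rw [isingGibbs_eq_mul_exp J h σ, isingGibbs_eq_mul_exp J h σ', isingGibbs_eq_mul_exp J h τ,
    isingGibbs_eq_mul_exp J h τ']
  linear_combination (isingGibbs J (fun _ => 0) σ * isingGibbs J (fun _ => 0) σ'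
    * isingGibbs J (fun _ => 0) τ * isingGibbs J (fun _ => 0) τ'
    * ((∑ τ, isingWeight J (fun _ => 0) τ) / ∑ τ, isingWeight J h τ) ^ 2) * hfield

end Gibbs

section BlockKernel

variable {n : ℕ} (J : Fin n → Fin n → ℝ)

noncomputable def blockPartition (σ σ' : Fin n → Bool) : ℝ :=
  ∑ A : Finset (Fin n),
    isingGibbs J (fun _ => 0) (mix A σ' σ) * isingGibbs J (fun _ => 0) (mix A σ σ')

lemma blockPartition_mix (Λ : Finset (Fin n)) (σ σ' : Fin n → Bool) :
    blockPartition J (mix Λ σ' σ) (mix Λ σ σ') = blockPartition J σ σ' := by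
  simp only [blockPartition, mix_mix_symmDiff]
  exact Fintype.sum_bijective _ (symmDiff_left_involutive Λ).bijective _ _ fun _ => rfl

lemma blockKernel_eq_sum (σ σ' τ τ' : Fin n → Bool) :
    blockKernel J σ σ' τ τ' = ∑ Λ : Finset (Fin n),
      if τ = mix Λ σ' σ ∧ τ' = mix Λ σ σ' then
        isingGibbs J (fun _ => 0) τ * isingGibbs J (fun _ => 0) τ' / blockPartition J σ σ'
      else 0 := by
  rw [blockKernel, ← blockPartition, sum_div]
  refine sum_congr rfl fun Λ _ => ?_
  split_ifs <;> simp_all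

end BlockKernel

theorem block_kernel_detailed_balance_general {n : ℕ} (J : Fin n → Fin n → ℝ)
    (h : Fin n → ℝ)
    (σ σ' τ τ' : Fin n → Bool) :
    isingGibbs J h σ * isingGibbs J h σ' * blockKernel J σ σ' τ τ'
      = isingGibbs J h τ * isingGibbs J h τ' * blockKernel J τ τ' σ σ' := by
  rw [blockKernel_eq_sum, blockKernel_eq_sum, mul_sum, mul_sum]
  refine sum_congr rfl fun Λ _ => ?_
  simp only [eq_mix_and_eq_mix_comm Λ τ τ' σ σ']
  split_ifs with hΛ
  · obtain ⟨rfl, rfl⟩ := hΛ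
    rw [blockPartition_mix, mul_div_assoc', mul_div_assoc',
      isingGibbs_mul_swap_of_spin_add_eq J h σ σ' _ _
        fun x => (spin_mix_add_spin_mix Λ σ' σ x).trans (add_comm _ _)]
  · simp

/-- the block kernel Q_J satisfies detailed balance with respect
to every Ising Gibbs measure μ_{J,h}. -/
theorem block_kernel_detailed_balance {n : ℕ} (J : Fin n → Fin n → ℝ)
    (hJsym : ∀ x y, J x y = J y x) (h : Fin n → ℝ)
    (σ σ' τ τ' : Fin n → Bool) :
    isingGibbs J h σ * isingGibbs J h σ' * blockKernel J σ σ' τ τ'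
      = isingGibbs J h τ * isingGibbs J h τ' * blockKernel J τ τ' σ σ' :=
  block_kernel_detailed_balance_general J h σ σ' τ τ'
end
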